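/- arXiv:2010.02641 — 8 statements merged into one kernel-verified Lean document; each statement's English description precedes it below -/
import Mathlib

section
/- For every integer k ≥ 2, all real numbers a, b, x, y and all X, Y ∈ E, one has ad(bB+X+yZ)^k(aB+Y+xZ) = b^{k−1}( (b/2^k)Y − (a/2^k)X + (bx − ay + 2(1 − 1/2^k)⟨JX,Y⟩)Z ). -/
open scoped RealInnerProductSpace

noncomputable section

namespace CHn

/-- `E n` is `ℂ^{n-1}`, viewed as a real inner product space with `⟪U,V⟫ = Re⟪U,V⟫_ℂ`
and complex structure `JU = iU`. -/
abbrev E (n : ℕ) := EuclideanSpace ℂ (Fin (n - 1))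

/-- The solvable part `𝔰 = 𝔞 ⊕ 𝔫` of the Iwasawa decomposition of `𝔰𝔲(1,n)`, modeled as
`ℝB ⊕ E ⊕ ℝZ`; the element `(a, U, x)` represents `aB + U + xZ`. -/
abbrev S (n : ℕ) := ℝ × E n × ℝ

variable (n : ℕ)

/-- The vector `B`. -/
def B : S n := (1, 0, 0)

/-- The vector `Z`. -/
def Z : S n := (0, 0, 1)

/-- The inner product of `𝔰` (`B`, `Z` unit, orthogonal direct sum `ℝB ⊕ E ⊕ ℝZ`). -/
def sInner (X Y : S n) : ℝ := X.1 * Y.1 + ⟪X.2.1, Y.2.1⟫ + X.2.2 * Y.2.2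

/-- The ambient complex structure on `𝔰`: `J(aB + U + xZ) = -xB + JU + aZ`. -/
def Js : S n →ₗ[ℝ] S n where
  toFun X := (-X.2.2, Complex.I • X.2.1, X.1)
  map_add' X Y := by
    refine Prod.ext ?_ (Prod.ext ?_ ?_)
    · simp; ring
    · simp [smul_add]
    · simp
  map_smul' c X := by
    refine Prod.ext ?_ (Prod.ext ?_ ?_)
    · simp only [Prod.smul_fst, Prod.smul_snd, smul_eq_mul, RingHom.id_apply]; ring
    · simp [Prod.smul_fst, Prod.smul_snd, smul_comm c Complex.I]
    · simp

/-- The Lie bracket of `𝔰`: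
`[aB + U + xZ, bB + V + yZ] = (1/2)(aV - bU) + (ay - bx + ⟪JU, V⟫)Z`. -/
def bra (X Y : S n) : S n :=
  (0, (2⁻¹ : ℝ) • (X.1 • Y.2.1 - Y.1 • X.2.1),
    X.1 * Y.2.2 - Y.1 * X.2.2 + ⟪Complex.I • X.2.1, Y.2.1⟫)

/-- `ad(X) = [X, ·]`, a (continuous) linear endomorphism of `𝔰`. -/
def ad (X : S n) : S n →L[ℝ] S n :=
  LinearMap.toContinuousLinearMap
    { toFun := bra n X
      map_add' := fun Y Y' => by
        unfold bra
        refine Prod.ext ?_ (Prod.ext ?_ ?_)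
        · simp
        · simp only [Prod.fst_add, Prod.snd_add]
          module
        · simp only [Prod.fst_add, Prod.snd_add, inner_add_right]
          ring
      map_smul' := fun c Y => by
        unfold bra
        have h : ⟪Complex.I • X.2.1, c • Y.2.1⟫ = c * ⟪Complex.I • X.2.1, Y.2.1⟫ :=
          real_inner_smul_right _ _ _
        refine Prod.ext ?_ (Prod.ext ?_ ?_)
        · simp
        · simp only [Prod.smul_fst, Prod.smul_snd, smul_eq_mul, RingHom.id_apply]
          module
        · simp only [Prod.smul_fst, Prod.smul_snd, smul_eq_mul, h, RingHom.id_apply]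
          ring }

/-- `exp(ad(X)) = Σ_{k ≥ 0} ad(X)^k / k!`. -/
def expAd (X : S n) : S n →L[ℝ] S n := NormedSpace.exp (ad n X)

/-- `ρ(t) = (e^t - 1)/t` for `t ≠ 0`, `ρ(0) = 1`. -/
def rho (t : ℝ) : ℝ := if t = 0 then 1 else (Real.exp t - 1) / t

/-- The Iwasawa group `AN`, modeled as `G = ℝ × E × ℝ`. -/
abbrev G (n : ℕ) := ℝ × E n × ℝ

/-- The product of `G`:
`(a,P,p)·(b,Q,q) = (a+b, P + e^{a/2}Q, p + e^a q + (1/2)e^{a/2}⟪JP,Q⟫)`. -/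
def gmul (g h : G n) : G n :=
  (g.1 + h.1, g.2.1 + Real.exp (g.1 / 2) • h.2.1,
    g.2.2 + Real.exp g.1 * h.2.2 + 2⁻¹ * Real.exp (g.1 / 2) * ⟪Complex.I • g.2.1, h.2.1⟫)

/-- The Lie exponential `Exp : 𝔰 → G`, `Exp(cB + W + zZ) = (c, ρ(c/2)W, ρ(c)z)`. -/
def Exp (X : S n) : G n := (X.1, rho (X.1 / 2) • X.2.1, rho X.1 * X.2.2)

/-- The inclusion of `E` into `𝔰`. -/
def inE : E n →ₗ[ℝ] S n where
  toFun U := (0, U, 0)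
  map_add' U V := by refine Prod.ext ?_ (Prod.ext ?_ ?_) <;> simp
  map_smul' c U := by refine Prod.ext ?_ (Prod.ext ?_ ?_) <;> simp

/-- A real subspace of `E` is totally real if `⟪Ju, v⟫ = 0` for all its elements. -/
def TotallyRealE (V : Submodule ℝ (E n)) : Prop :=
  ∀ u ∈ V, ∀ v ∈ V, ⟪Complex.I • u, v⟫ = 0

/-- A real subspace of `E` is complex if it is `J`-invariant. -/
def IsComplexE (V : Submodule ℝ (E n)) : Prop :=
  ∀ u ∈ V, Complex.I • u ∈ V

/-- The maximal complex subspace `V ∩ JV` of a real subspace `V` of `E`. -/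
def maxCE (V : Submodule ℝ (E n)) : Set (E n) := {w | w ∈ V ∧ Complex.I • w ∈ V}

/-- `V` is a CR subspace of `E` if the orthogonal complement in `V` of its maximal
complex subspace `V ∩ JV` is totally real. -/
def IsCRE (V : Submodule ℝ (E n)) : Prop :=
  ∀ u ∈ V, ∀ v ∈ V, (∀ w ∈ maxCE n V, ⟪u, w⟫ = 0) →
    (∀ w ∈ maxCE n V, ⟪v, w⟫ = 0) → ⟪Complex.I • u, v⟫ = 0

/-- A subset of `𝔰` is totally real if `⟪Ju, v⟫ = 0` for all its elements. -/
def TotallyRealS (V : Set (S n)) : Prop := ∀ u ∈ V, ∀ v ∈ V, sInner n (Js n u) v = 0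

/-- The maximal complex subspace `V ∩ JV` of a real subspace `V` of `𝔰`. -/
def maxCS (V : Set (S n)) : Set (S n) := {x | x ∈ V ∧ Js n x ∈ V}

/-- `V` is a CR subspace of `𝔰` if the orthogonal complement in `V` of its maximal
complex subspace `V ∩ JV` is totally real. -/
def IsCRS (V : Set (S n)) : Prop :=
  ∀ u ∈ V, ∀ v ∈ V, (∀ w ∈ maxCS n V, sInner n u w = 0) →
    (∀ w ∈ maxCS n V, sInner n v w = 0) → sInner n (Js n u) v = 0


/-!
`ad(bB + X + yZ)` maps `𝔰` into the nilradical `E ⊕ ℝZ`, on which it acts by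
`V + zZ ↦ (b/2)V + (bz + ⟪JX, V⟫)Z`. Iterating, the `Z`-coefficient picks up the geometric sum
`Σ_{i ≤ m} b^{m-i}(b/2)^i = 2(1 - 2^{-(m+1)}) b^m` times `⟪JX, V⟫`. After the first bracket,
`V = (bY - aX)/2`, and `⟪JX, X⟫ = 0` leaves only the `Y`-part of it.
-/

theorem _root_.EuclideanSpace.real_inner_I_smul_self {ι : Type*} [Fintype ι]
    (X : EuclideanSpace ℂ ι) : ⟪Complex.I • X, X⟫ = 0 := by
  simp [PiLp.inner_apply, Complex.inner, mul_comm]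

lemma ad_mk_apply (b a y x : ℝ) (X Y : E n) :
    ad n ((b, X, y) : S n) ((a, Y, x) : S n) =
      ((0, (2⁻¹ : ℝ) • (b • Y - a • X), b * x - a * y + ⟪Complex.I • X, Y⟫) : S n) :=
  rfl

lemma ad_pow_succ_apply_nilradical (b y z : ℝ) (X V : E n) (m : ℕ) :
    (ad n ((b, X, y) : S n) ^ (m + 1)) ((0, V, z) : S n) =
      ((0, (b / 2) ^ (m + 1) • V,
        b ^ (m + 1) * z + 2 * (1 - 1 / 2 ^ (m + 1)) * b ^ m * ⟪Complex.I • X, V⟫) : S n) := by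
  induction m with
  | zero =>
    rw [pow_one, ad_mk_apply]
    refine Prod.ext rfl (Prod.ext ?_ ?_)
    · simp only [zero_smul, sub_zero]
      module
    · ring
  | succ m ih =>
    rw [pow_succ', mul_apply_eq_comp, ih, ad_mk_apply]
    refine Prod.ext rfl (Prod.ext ?_ ?_)
    · simp only [zero_smul, sub_zero]
      module
    · simp only [real_inner_smul_right, div_pow]
      ring

theorem statement1_general (n : ℕ) (k : ℕ) (hk : 2 ≤ k) (a b x y : ℝ) (X Y : E n) :
    (ad n ((b, X, y) : S n) ^ k) ((a, Y, x) : S n) =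
      b ^ (k - 1) •
        ((0, (b / 2 ^ k) • Y - (a / 2 ^ k) • X,
          b * x - a * y + 2 * (1 - 1 / 2 ^ k) * ⟪Complex.I • X, Y⟫) : S n) := by
  obtain ⟨m, rfl⟩ := Nat.exists_eq_add_of_le' hk
  have hJX : ⟪Complex.I • X, (2⁻¹ : ℝ) • (b • Y - a • X)⟫ = 2⁻¹ * b * ⟪Complex.I • X, Y⟫ := by
    rw [real_inner_smul_right, inner_sub_right, real_inner_smul_right, real_inner_smul_right,
      EuclideanSpace.real_inner_I_smul_self]
    ring
  rw [pow_succ, mul_apply_eq_comp, ad_mk_apply, ad_pow_succ_apply_nilradical, hJX,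
    show m + 2 - 1 = m + 1 by omega]
  refine Prod.ext (by simp) (Prod.ext ?_ ?_)
  · simp only [Prod.smul_snd, Prod.smul_fst, div_pow]
    module
  · simp only [Prod.smul_snd, smul_eq_mul]
    ring

/-- For every integer `k ≥ 2`, all real `a, b, x, y` and all `X, Y ∈ E`,
`ad(bB+X+yZ)^k(aB+Y+xZ) = b^{k−1}((b/2^k)Y − (a/2^k)X + (bx − ay + 2(1 − 1/2^k)⟨JX,Y⟩)Z)`. -/
theorem statement1 (n : ℕ) (hn : 2 ≤ n) (k : ℕ) (hk : 2 ≤ k) (a b x y : ℝ) (X Y : E n) :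
    (ad n ((b, X, y) : S n) ^ k) ((a, Y, x) : S n) =
      b ^ (k - 1) •
        ((0, (b / 2 ^ k) • Y - (a / 2 ^ k) • X,
          b * x - a * y + 2 * (1 - 1 / 2 ^ k) * ⟪Complex.I • X, Y⟫) : S n) :=
  statement1_general n k hk a b x y X Y

end CHn
end
end

section
/- For all real numbers a, b, x, y and all X, Y ∈ E, one has exp(ad(bB+X+yZ))(aB+Y+xZ) = aB + e^{b/2}Y − (a/2)ρ(b/2)X + ( x e^{b} − a y ρ(b) + e^{b/2}ρ(b/2)⟨JX,Y⟩ )Z. -/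
open scoped RealInnerProductSpace

noncomputable section

namespace CHn

variable (n : ℕ)

/-!
`ad(bB + X + yZ)` sends `v = aB + Y + xZ` to `p + q` with `p = ½(bY − aX) − ⟪JX,Y⟫Z` and
`q = (bx − ay + 2⟪JX,Y⟫)Z`, and `p`, `q` are eigenvectors of `ad(bB + X + yZ)` for the
eigenvalues `b/2` and `b` (for `p` because `⟪JX,X⟫ = 0`). Writing
`exp(A)v = v + Σₖ Aᵏ(Av)/(k+1)!` and using `Σₖ tᵏ/(k+1)! = ρ(t)`, this gives
`exp(A)v = v + ρ(b/2)p + ρ(b)q`, even when `b = 0` and `A` is nilpotent. The identities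
`eᵗ = 1 + tρ(t)` and `e^{t/2}ρ(t/2) = 2ρ(t) − ρ(t/2)` put this in the stated form.
-/

theorem hasSum_pow_div_factorial_succ (t : ℝ) :
    HasSum (fun k : ℕ => t ^ k / (k + 1).factorial) (rho t) := by
  rcases eq_or_ne t 0 with rfl | ht
  · rw [rho, if_pos rfl]
    convert hasSum_ite_eq 0 (1 : ℝ) using 2 with k
    rcases k with _ | k <;> simp
  · have h : HasSum (fun k : ℕ => t ^ (k + 1) / (k + 1).factorial) (Real.exp t - 1) := by
      simpa [Real.exp_eq_exp_ℝ] using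
        (hasSum_nat_add_iff' 1).mpr (NormedSpace.expSeries_div_hasSum_exp t)
    rw [rho, if_neg ht]
    have hterm : ∀ k : ℕ, t ^ k / (k + 1).factorial = t ^ (k + 1) / (k + 1).factorial / t :=
      fun k => by rw [pow_succ, mul_div_right_comm, mul_div_cancel_right₀ _ ht]
    simpa only [← hterm] using h.div_const t

theorem exp_eq_one_add_mul_rho (t : ℝ) : Real.exp t = 1 + t * rho t := by
  rcases eq_or_ne t 0 with rfl | ht
  · simp [rho]
  · rw [rho, if_neg ht]; field_simp; ring

theorem exp_half_mul_rho_half (t : ℝ) :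
    Real.exp (t / 2) * rho (t / 2) = 2 * rho t - rho (t / 2) := by
  have h := exp_eq_one_add_mul_rho t
  have h2 := exp_eq_one_add_mul_rho (t / 2)
  rcases eq_or_ne t 0 with rfl | ht
  · norm_num [rho]
  · have hsq : Real.exp t = Real.exp (t / 2) ^ 2 := by rw [← Real.exp_nat_mul]; ring_nf
    apply mul_left_cancel₀ ht
    rw [h2] at hsq ⊢
    linear_combination (-2 : ℝ) * (h.symm.trans hsq)

section ExpOfOperator

variable {V : Type*} [NormedAddCommGroup V] [NormedSpace ℝ V]

theorem hasSum_exp_apply_sub_self [CompleteSpace V] (A : V →L[ℝ] V) (v : V) :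
    HasSum (fun k : ℕ => ((k + 1).factorial⁻¹ : ℝ) • (A ^ k) (A v))
      (NormedSpace.exp A v - v) := by
  have h := (NormedSpace.exp_series_hasSum_exp' (𝕂 := ℝ) A).mapL
    (ContinuousLinearMap.apply ℝ V v)
  simpa [pow_succ] using (hasSum_nat_add_iff' 1).mpr h

theorem hasSum_pow_apply_of_apply_eq_smul {A : V →L[ℝ] V} {p : V} {α : ℝ} (hp : A p = α • p) :
    HasSum (fun k : ℕ => ((k + 1).factorial⁻¹ : ℝ) • (A ^ k) p) (rho α • p) := by
  have hpow (k : ℕ) : (A ^ k) p = α ^ k • p := by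
    induction k with
    | zero => simp
    | succ k ih => rw [pow_succ', mul_apply_eq_comp, ih, map_smul, hp, smul_smul, pow_succ]
  convert (hasSum_pow_div_factorial_succ α).smul_const p using 2 with k
  rw [hpow, smul_smul, div_eq_inv_mul]

theorem exp_apply_of_apply_eq_add [CompleteSpace V] {A : V →L[ℝ] V} {v p q : V} {α β : ℝ}
    (hv : A v = p + q) (hp : A p = α • p) (hq : A q = β • q) :
    NormedSpace.exp A v = v + rho α • p + rho β • q := by
  have h := (hasSum_pow_apply_of_apply_eq_smul hp).add (hasSum_pow_apply_of_apply_eq_smul hq)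
  simp only [← smul_add, ← map_add, ← hv] at h
  rw [add_assoc, ← (hasSum_exp_apply_sub_self A v).unique h]
  abel

end ExpOfOperator

theorem real_inner_I_smul_self_left {m : ℕ} (U : EuclideanSpace ℂ (Fin m)) :
    ⟪Complex.I • U, U⟫ = 0 := by
  rw [PiLp.inner_apply]
  refine Finset.sum_eq_zero fun i _ => ?_
  simp [Complex.inner, Complex.mul_re, Complex.mul_im]
  ring

section Bracket
variable {n : ℕ}

theorem ad_apply (W v : S n) : ad n W v = bra n W v := rfl

theorem ad_apply_eq_add (a b x y : ℝ) (X Y : E n) :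
    ad n ((b, X, y) : S n) ((a, Y, x) : S n) =
      ((0, (2⁻¹ : ℝ) • (b • Y - a • X), -⟪Complex.I • X, Y⟫) : S n) +
        ((0, 0, b * x - a * y + 2 * ⟪Complex.I • X, Y⟫) : S n) := by
  refine Prod.ext (by simp [ad_apply, bra]) (Prod.ext (by simp [ad_apply, bra]) ?_)
  simp only [ad_apply, bra, Prod.snd_add]
  ring

theorem ad_apply_eq_half_smul {b y z : ℝ} {X U : E n} (hU : ⟪Complex.I • X, U⟫ = -(b / 2 * z)) :
    ad n ((b, X, y) : S n) ((0, U, z) : S n) = (b / 2) • ((0, U, z) : S n) := by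
  refine Prod.ext (by simp [ad_apply, bra]) (Prod.ext ?_ ?_)
  · simp only [ad_apply, bra, Prod.smul_snd, Prod.smul_fst]
    match_scalars <;> ring
  · simp only [ad_apply, bra, Prod.smul_snd, smul_eq_mul, hU]
    ring

theorem ad_apply_center (W : S n) (z : ℝ) :
    ad n W ((0, 0, z) : S n) = W.1 • ((0, 0, z) : S n) := by
  refine Prod.ext ?_ (Prod.ext ?_ ?_) <;> simp [ad_apply, bra]

end Bracket

theorem statement2_general (n : ℕ) (a b x y : ℝ) (X Y : E n) :
    expAd n ((b, X, y) : S n) ((a, Y, x) : S n) =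
      ((a, Real.exp (b / 2) • Y - (a / 2 * rho (b / 2)) • X,
        x * Real.exp b - a * y * rho b +
          Real.exp (b / 2) * rho (b / 2) * ⟪Complex.I • X, Y⟫) : S n) := by
  set c := ⟪Complex.I • X, Y⟫
  have hU : ⟪Complex.I • X, (2⁻¹ : ℝ) • (b • Y - a • X)⟫ = -(b / 2 * -c) := by
    rw [real_inner_smul_right, inner_sub_right, real_inner_smul_right, real_inner_smul_right,
      real_inner_I_smul_self_left]
    ring
  rw [expAd, exp_apply_of_apply_eq_add (ad_apply_eq_add a b x y X Y)
    (ad_apply_eq_half_smul hU) (ad_apply_center _ _)]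
  refine Prod.ext (by simp) (Prod.ext ?_ ?_)
  · simp only [Prod.snd_add, Prod.fst_add, Prod.smul_snd, Prod.smul_fst, smul_zero, add_zero,
      exp_eq_one_add_mul_rho (b / 2)]
    match_scalars <;> ring
  · simp only [Prod.snd_add, Prod.smul_snd, smul_eq_mul]
    linear_combination (-x) * exp_eq_one_add_mul_rho b - c * exp_half_mul_rho_half b

/-- For all real `a, b, x, y` and all `X, Y ∈ E`, one has
`exp(ad(bB+X+yZ))(aB+Y+xZ) = aB + e^{b/2}Y − (a/2)ρ(b/2)X
  + (xe^b − ayρ(b) + e^{b/2}ρ(b/2)⟨JX,Y⟩)Z`. -/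
theorem statement2 (n : ℕ) (hn : 2 ≤ n) (a b x y : ℝ) (X Y : E n) :
    expAd n ((b, X, y) : S n) ((a, Y, x) : S n) =
      ((a, Real.exp (b / 2) • Y - (a / 2 * rho (b / 2)) • X,
        x * Real.exp b - a * y * rho b +
          Real.exp (b / 2) * rho (b / 2) * ⟪Complex.I • X, Y⟫) : S n) :=
  statement2_general n a b x y X Y

end CHn
end
end

section
/- Let 𝔥 be a Lie subalgebra of 𝔰 which is a CR subspace of 𝔰. Then there exists X ∈ 𝔰 such that exp(ad(X))(𝔥) = 𝔟 ⊕ 𝔠 ⊕ 𝔯 ⊕ 𝔷, an orthogonal direct sum in which 𝔟 is a subspace of ℝB, 𝔠 is a complex subspace of E, 𝔯 is a totally real subspace of E orthogonal to 𝔠, and 𝔷 is a subspace of ℝZ containing [𝔠,𝔠] (that is, 𝔷 = ℝZ whenever 𝔠 ≠ 0). -/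
open scoped RealInnerProductSpace

noncomputable section

namespace CHn

variable (n : ℕ)

/-! For `X = (0, W, x₀)` in the nilradical, `ad X` squares to zero, so `exp (ad X) = 1 + ad X` is an
explicit automorphism of `𝔰`. Taking `X` from the `B`-direction `(1, U₀, x₀)` of `𝔥` (or, when
`𝔥 ⊆ ker B*`, from a vector orthogonal to `𝔥`), the conjugate `𝔥'` becomes
`(𝔥' ∩ ℝB) ⊕ V ⊕ (𝔥' ∩ ℝZ)` with `V ⊆ E`, and `V = 𝔠 ⊕ 𝔯` for `𝔠 = V ∩ JV`. It remains to show
that `V` is CR. If `Z ∉ 𝔥`, the brackets `[u, v] = ⟪Ju, v⟫ Z` make `V` totally real; the same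
brackets give `Z ∈ 𝔥'` once `𝔠 ≠ 0`. If `Z ∈ 𝔥`, then `V = 𝔥 ∩ E`, and `𝔥` contains some
`(1, U, 0)` with `U ⊥ V` (or lies in `ker B*`). That `𝔥` is CR means that orthogonal projection
to `𝔥` maps `J𝔥` into `𝔥 ∩ J𝔥`; applied to `JZ = -B` this gives `J(1, U, 0) ∈ 𝔥`, i.e. `JU ∈ V`.
Then for `x ∈ V ⊖ 𝔠`, the component of `x` orthogonal to the complex line through `(1, U, 0)` is
orthogonal to `𝔥 ∩ J𝔥`, and these components pair under `J` as the `x` do, so the CR property of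
`𝔥` makes `V ⊖ 𝔠` totally real. -/

variable {n}

open scoped InnerProductSpace

lemma real_inner_E_eq_re (u v : E n) : ⟪u, v⟫ = (⟪u, v⟫_ℂ).re := by
  simp only [PiLp.inner_apply, Complex.inner]
  rw [Complex.re_sum]
  rfl

lemma real_inner_I_smul_left (u v : E n) : ⟪Complex.I • u, v⟫ = -⟪u, Complex.I • v⟫ := by
  simp [real_inner_E_eq_re]

lemma real_inner_I_smul_I_smul (u v : E n) : ⟪Complex.I • u, Complex.I • v⟫ = ⟪u, v⟫ := by
  simp [real_inner_E_eq_re, ← mul_assoc]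

lemma real_inner_I_smul_swap (u v : E n) : ⟪Complex.I • u, v⟫ = -⟪Complex.I • v, u⟫ := by
  rw [real_inner_I_smul_left, real_inner_comm]

lemma real_inner_I_smul_self_left_s4 (u : E n) : ⟪Complex.I • u, u⟫ = 0 := by
  have h := real_inner_I_smul_swap u u
  linarith

lemma real_inner_I_smul_self_right (u : E n) : ⟪u, Complex.I • u⟫ = 0 := by
  rw [real_inner_comm, real_inner_I_smul_self_left_s4]

lemma I_smul_I_smul (u : E n) : Complex.I • Complex.I • u = -u := by
  rw [smul_smul, Complex.I_mul_I, neg_one_smul]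

lemma sInner_comm (X Y : S n) : sInner n X Y = sInner n Y X := by
  simp only [sInner, real_inner_comm]
  ring

lemma sInner_add_left (X Y W : S n) : sInner n (X + Y) W = sInner n X W + sInner n Y W := by
  simp only [sInner, Prod.fst_add, Prod.snd_add, inner_add_left]
  ring

lemma sInner_add_right (X Y W : S n) : sInner n W (X + Y) = sInner n W X + sInner n W Y := by
  rw [sInner_comm, sInner_add_left, sInner_comm X, sInner_comm Y]

lemma sInner_sub_left (X Y W : S n) : sInner n (X - Y) W = sInner n X W - sInner n Y W := by
  simp only [sInner, Prod.fst_sub, Prod.snd_sub, inner_sub_left]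
  ring

lemma sInner_self_eq_zero {X : S n} : sInner n X X = 0 ↔ X = 0 := by
  refine ⟨fun h => ?_, fun h => by simp [h, sInner]⟩
  simp only [sInner, real_inner_self_eq_norm_sq] at h
  have h' : X.1 = 0 ∧ ‖X.2.1‖ = 0 ∧ X.2.2 = 0 := by
    refine ⟨?_, ?_, ?_⟩ <;> nlinarith [sq_nonneg X.1, sq_nonneg ‖X.2.1‖, sq_nonneg X.2.2]
  exact Prod.ext h'.1 (Prod.ext (norm_eq_zero.1 h'.2.1) h'.2.2)

lemma Js_apply (X : S n) : Js n X = (-X.2.2, Complex.I • X.2.1, X.1) := rfl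

lemma Js_Js (X : S n) : Js n (Js n X) = -X :=
  Prod.ext rfl (Prod.ext (I_smul_I_smul _) rfl)

lemma sInner_Js_left (X Y : S n) : sInner n (Js n X) Y = -sInner n X (Js n Y) := by
  simp only [sInner, Js_apply, real_inner_I_smul_left]
  ring

/-- `sInner` is not an `InnerProductSpace` structure on `S n`; this isometry onto an `L²` product
supplies orthogonal projections. -/
def toL2 : S n →ₗ[ℝ] WithLp 2 (ℝ × WithLp 2 (E n × ℝ)) where
  toFun X := WithLp.toLp 2 (X.1, WithLp.toLp 2 (X.2.1, X.2.2))
  map_add' _ _ := rfl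
  map_smul' _ _ := rfl

lemma inner_toL2 (X Y : S n) : ⟪toL2 X, toL2 Y⟫ = sInner n X Y := by
  simp only [toL2, Prod.mk.eta, LinearMap.coe_mk, AddHom.coe_mk, WithLp.prod_inner_apply,
    RCLike.inner_apply, Real.ringHom_apply, sInner]
  ring

lemma exists_sInner_orthogonal (P : Submodule ℝ (S n)) (u : S n) :
    ∃ p ∈ P, ∀ q ∈ P, sInner n (u - p) q = 0 := by
  set K := P.map toL2
  obtain ⟨p, hp, hpK⟩ := Submodule.mem_map.1 (K.starProjection_apply_mem (toL2 u))
  refine ⟨p, hp, fun q hq => ?_⟩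
  have h := (Submodule.mem_orthogonal' _ _).1 (K.sub_starProjection_mem_orthogonal (toL2 u))
    (toL2 q) (Submodule.mem_map_of_mem hq)
  rwa [← hpK, ← map_sub, inner_toL2] at h

section ExpAd

lemma exp_eq_one_add_of_mul_self_eq_zero {A : Type*} [NormedRing A] [NormedAlgebra ℝ A]
    [CompleteSpace A] {a : A} (ha : a * a = 0) : NormedSpace.exp a = 1 + a := by
  have hvanish : ∀ k ∉ Finset.range 2, (k.factorial⁻¹ : ℝ) • a ^ k = 0 := by
    intro k hk
    obtain ⟨j, rfl⟩ := Nat.exists_eq_add_of_le (not_lt.1 (Finset.mem_range.not.1 hk))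
    rw [pow_add, sq, ha, zero_mul, smul_zero]
  rw [congrFun (NormedSpace.exp_eq_tsum ℝ) a, tsum_eq_sum hvanish]
  simp [Finset.sum_range_succ]

variable {X : S n}

lemma bra_bra_of_fst_eq_zero (hX : X.1 = 0) (Y : S n) : bra n X (bra n X Y) = 0 := by
  refine Prod.ext ?_ (Prod.ext ?_ ?_) <;>
    simp [bra, hX, real_inner_smul_right, real_inner_I_smul_self_left_s4]

lemma expAd_apply (hX : X.1 = 0) (Y : S n) : expAd n X Y = Y + bra n X Y := by
  have hsq : ad n X * ad n X = 0 := ContinuousLinearMap.ext (bra_bra_of_fst_eq_zero hX)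
  rw [expAd, exp_eq_one_add_of_mul_self_eq_zero hsq]
  rfl

lemma mem_map_expAd_iff (hX : X.1 = 0) {𝔥 : Submodule ℝ (S n)} {Y : S n} :
    Y ∈ 𝔥.map (expAd n X).toLinearMap ↔ Y - bra n X Y ∈ 𝔥 := by
  have hadd : ∀ Y Y', bra n X (Y + Y') = bra n X Y + bra n X Y' := map_add (ad n X)
  have hsub : ∀ Y Y', bra n X (Y - Y') = bra n X Y - bra n X Y' := map_sub (ad n X)
  constructor
  · rintro ⟨W, hW, rfl⟩
    simpa [expAd_apply hX, hadd, bra_bra_of_fst_eq_zero hX] using hW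
  · exact fun hY => ⟨_, hY, by simp [expAd_apply hX, hsub, bra_bra_of_fst_eq_zero hX]⟩

lemma expAd_bra (hX : X.1 = 0) (Y Y' : S n) :
    expAd n X (bra n Y Y') = bra n (expAd n X Y) (expAd n X Y') := by
  simp only [expAd_apply hX]
  refine Prod.ext ?_ (Prod.ext ?_ ?_)
  · simp [bra]
  · simp only [bra, hX, zero_smul, sub_self, smul_zero, zero_mul, zero_add, add_zero, zero_sub,
      smul_neg, Prod.fst_add, Prod.snd_add, smul_add]
    module
  · simp only [bra, hX, Prod.fst_add, Prod.snd_add, zero_smul, zero_sub, zero_mul, add_zero,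
      smul_add, smul_sub, smul_neg, smul_comm Complex.I (_ : ℝ), inner_add_left, inner_add_right,
      inner_sub_right, inner_neg_left, inner_neg_right, real_inner_smul_left,
      real_inner_smul_right, real_inner_I_smul_self_left_s4, real_inner_I_smul_swap Y.2.1 X.2.1]
    ring

lemma bra_Z (hX : X.1 = 0) : bra n X (Z n) = 0 := by
  simp [bra, Z, hX]

lemma Z_mem_map_expAd_iff (hX : X.1 = 0) {𝔥 : Submodule ℝ (S n)} :
    Z n ∈ 𝔥.map (expAd n X).toLinearMap ↔ Z n ∈ 𝔥 := by
  rw [mem_map_expAd_iff hX, bra_Z hX, sub_zero]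

lemma comap_inE_map_expAd (hX : X.1 = 0) {𝔥 : Submodule ℝ (S n)} (hZ : Z n ∈ 𝔥) :
    (𝔥.map (expAd n X).toLinearMap).comap (inE n) = 𝔥.comap (inE n) := by
  ext u
  have h : bra n X (inE n u) = ⟪Complex.I • X.2.1, u⟫ • Z n := by simp [bra, inE, Z, hX]
  rw [Submodule.mem_comap, Submodule.mem_comap, mem_map_expAd_iff hX, h,
    𝔥.sub_mem_iff_left (𝔥.smul_mem _ hZ)]

end ExpAd

section LieSubalgebra

def IsLieSubalgebra (𝔥 : Submodule ℝ (S n)) : Prop := ∀ X ∈ 𝔥, ∀ Y ∈ 𝔥, bra n X Y ∈ 𝔥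

variable {𝔥 : Submodule ℝ (S n)}

lemma IsLieSubalgebra.map_expAd (h𝔥 : IsLieSubalgebra 𝔥) {X : S n} (hX : X.1 = 0) :
    IsLieSubalgebra (𝔥.map (expAd n X).toLinearMap) := by
  rintro _ ⟨Y, hY, rfl⟩ _ ⟨Y', hY', rfl⟩
  exact ⟨bra n Y Y', h𝔥 Y hY Y' hY', expAd_bra hX Y Y'⟩

lemma bra_inE_inE (u v : E n) : bra n (inE n u) (inE n v) = ⟪Complex.I • u, v⟫ • Z n := by
  simp [bra, inE, Z]

lemma IsLieSubalgebra.smul_Z_mem (h𝔥 : IsLieSubalgebra 𝔥) {u v : E n}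
    (hu : u ∈ 𝔥.comap (inE n)) (hv : v ∈ 𝔥.comap (inE n)) : ⟪Complex.I • u, v⟫ • Z n ∈ 𝔥 := by
  rw [← bra_inE_inE]
  exact h𝔥 _ hu _ hv

lemma IsLieSubalgebra.totallyRealE_comap_inE (h𝔥 : IsLieSubalgebra 𝔥) (hZ : Z n ∉ 𝔥) :
    TotallyRealE n (𝔥.comap (inE n)) := by
  intro u hu v hv
  by_contra h
  exact hZ ((𝔥.smul_mem_iff h).1 (h𝔥.smul_Z_mem hu hv))

lemma IsLieSubalgebra.Z_mem_of_mem_maxCE (h𝔥 : IsLieSubalgebra 𝔥) {c : E n}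
    (hc : c ∈ maxCE n (𝔥.comap (inE n))) (hc0 : c ≠ 0) : Z n ∈ 𝔥 := by
  have h := h𝔥.smul_Z_mem hc.1 hc.2
  rwa [real_inner_I_smul_I_smul, real_inner_self_eq_norm_sq, 𝔥.smul_mem_iff (by positivity)] at h

end LieSubalgebra

section NormalForm

lemma eq_sup_of_proj_mem {P : Submodule ℝ (S n)} (hB : ∀ y ∈ P, y.1 • B n ∈ P)
    (hZ : ∀ y ∈ P, y.2.2 • Z n ∈ P) :
    P = P ⊓ Submodule.span ℝ {B n} ⊔ (P.comap (inE n)).map (inE n) ⊔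
      P ⊓ Submodule.span ℝ {Z n} := by
  refine le_antisymm (fun y hy => ?_)
    (sup_le (sup_le inf_le_left (Submodule.map_comap_le _ _)) inf_le_left)
  have hE' : inE n y.2.1 = y - y.1 • B n - y.2.2 • Z n := by
    refine Prod.ext ?_ (Prod.ext ?_ ?_) <;> simp [B, Z, inE]
  have hE : inE n y.2.1 ∈ P := by
    rw [hE']
    exact P.sub_mem (P.sub_mem hy (hB y hy)) (hZ y hy)
  have hy' : y = y.1 • B n + inE n y.2.1 + y.2.2 • Z n := by
    rw [hE']
    abel
  rw [hy']
  exact Submodule.add_mem_sup (Submodule.add_mem_sup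
    ⟨hB y hy, Submodule.smul_mem _ _ (Submodule.mem_span_singleton_self _)⟩ ⟨_, hE, rfl⟩)
    ⟨hZ y hy, Submodule.smul_mem _ _ (Submodule.mem_span_singleton_self _)⟩

/-- `(1, U₀, x₀)` spans the `B`-direction of `𝔥` (if any), and on `𝔥 ∩ ker B*` the `Z`-coordinate
is `-2⟪JU₀, ·⟫` of the `E`-coordinate modulo `𝔥 ∩ ℝZ`; conjugation by `exp ad (0, 2U₀, x₀)`
straightens out both. -/
def Normalizes (U₀ : E n) (x₀ : ℝ) (𝔥 : Submodule ℝ (S n)) : Prop :=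
  (∀ h ∈ 𝔥, h.1 • ((1 : ℝ), U₀, x₀) ∈ 𝔥) ∧
    ∀ k ∈ 𝔥, k.1 = 0 → (k.2.2 + 2 * ⟪Complex.I • U₀, k.2.1⟫) • Z n ∈ 𝔥

variable {𝔥 : Submodule ℝ (S n)}

lemma sub_bra_apply (U₀ : E n) (x₀ : ℝ) (Y : S n) :
    Y - bra n ((0 : ℝ), (2 : ℝ) • U₀, x₀) Y =
      (Y.1, Y.2.1 + Y.1 • U₀, Y.2.2 + Y.1 * x₀ - 2 * ⟪Complex.I • U₀, Y.2.1⟫) := by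
  refine Prod.ext ?_ (Prod.ext ?_ ?_)
  · simp [bra]
  · simp only [bra, Prod.snd_sub, Prod.fst_sub, zero_smul, zero_sub, smul_neg, smul_smul]
    module
  · simp only [bra, zero_smul, zero_sub, smul_neg, zero_mul, smul_comm Complex.I (2 : ℝ),
      real_inner_smul_left, Prod.snd_sub]
    ring

lemma map_expAd_proj_mem {U₀ : E n} {x₀ : ℝ} (h : Normalizes U₀ x₀ 𝔥) {y : S n}
    (hy : y ∈ 𝔥.map (expAd n ((0 : ℝ), (2 : ℝ) • U₀, x₀)).toLinearMap) :
    y.1 • B n ∈ 𝔥.map (expAd n ((0 : ℝ), (2 : ℝ) • U₀, x₀)).toLinearMap ∧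
      y.2.2 • Z n ∈ 𝔥.map (expAd n ((0 : ℝ), (2 : ℝ) • U₀, x₀)).toLinearMap := by
  rw [mem_map_expAd_iff rfl, sub_bra_apply] at hy
  rw [mem_map_expAd_iff rfl, mem_map_expAd_iff rfl, sub_bra_apply, sub_bra_apply]
  constructor
  · convert h.1 _ hy using 1
    refine Prod.ext ?_ (Prod.ext ?_ ?_) <;> simp [B]
  · have hk := 𝔥.sub_mem hy (h.1 _ hy)
    convert h.2 _ hk (by simp) using 1
    refine Prod.ext ?_ (Prod.ext ?_ ?_)
    · simp [Z]
    · simp [Z]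
    · simp only [Z, Prod.smul_mk, smul_eq_mul, mul_zero, smul_zero, mul_one, inner_zero_right,
        sub_zero, Prod.mk_sub_mk, sub_self, add_sub_cancel_right]
      ring

lemma IsLieSubalgebra.exists_normalizes_of_fst_ne_zero (h𝔥 : IsLieSubalgebra 𝔥) {h₀ : S n}
    (hh₀ : h₀ ∈ 𝔥) (hh₀1 : h₀.1 ≠ 0) : ∃ (U₀ : E n) (x₀ : ℝ), Normalizes U₀ x₀ 𝔥 := by
  set W₀ := h₀.1⁻¹ • h₀
  have hW₀ : ((1 : ℝ), W₀.2.1, W₀.2.2) ∈ 𝔥 := by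
    convert 𝔥.smul_mem h₀.1⁻¹ hh₀
    simp [hh₀1]
  refine ⟨W₀.2.1, W₀.2.2, fun h _ => 𝔥.smul_mem _ hW₀, fun k hk hk1 => ?_⟩
  -- on `ker B*`, `ad (1, U₀, x₀)` is `1/2` on `E` and `1` on `ℝZ` up to the tilt, so `2 ad - 1`
  -- isolates the `Z`-part
  have h : (k.2.2 + 2 * ⟪Complex.I • W₀.2.1, k.2.1⟫) • Z n =
      (2 : ℝ) • bra n ((1 : ℝ), W₀.2.1, W₀.2.2) k - k := by
    refine Prod.ext ?_ (Prod.ext ?_ ?_)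
    · simp [bra, Z, hk1]
    · simp [bra, Z, hk1]
    · simp only [Z, Prod.smul_mk, smul_eq_mul, mul_zero, mul_one, bra, hk1, zero_smul, sub_zero,
        one_mul, zero_mul, Prod.snd_sub]
      ring
  rw [h]
  exact 𝔥.sub_mem (𝔥.smul_mem _ (h𝔥 _ hW₀ _ hk)) hk

lemma exists_smul_Z_mem (𝔥 : Submodule ℝ (S n)) : ∃ U₀ : E n,
    ∀ k ∈ 𝔥, k.1 = 0 → (k.2.2 + 2 * ⟪Complex.I • U₀, k.2.1⟫) • Z n ∈ 𝔥 := by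
  by_cases hZ : Z n ∈ 𝔥
  · exact ⟨0, fun k _ _ => 𝔥.smul_mem _ hZ⟩
  -- a vector `w ⊥ 𝔥` with `w.2.2 ≠ 0` makes the `Z`-coordinate on `𝔥 ∩ ker B*` a function of `E`
  obtain ⟨p, hp, hZp⟩ := exists_sInner_orthogonal 𝔥 (Z n)
  set w := Z n - p
  have hw : w.2.2 ≠ 0 := by
    have h : sInner n w w = w.2.2 := by
      rw [sInner_comm, sInner_sub_left, sInner_comm p, hZp p hp, sub_zero]
      simp [sInner, Z]
    rw [← h, Ne, sInner_self_eq_zero, sub_eq_zero]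
    rintro rfl
    exact hZ hp
  set U₀ : E n := -((2 * w.2.2)⁻¹ • Complex.I • w.2.1)
  have hIU₀ : Complex.I • U₀ = (2 * w.2.2)⁻¹ • w.2.1 := by
    rw [smul_neg, smul_comm, I_smul_I_smul, smul_neg, neg_neg]
  refine ⟨U₀, fun k hk hk1 => ?_⟩
  have hwk := hZp k hk
  simp only [sInner, hk1, mul_zero, zero_add] at hwk
  have hcoef : k.2.2 + 2 * ⟪Complex.I • U₀, k.2.1⟫ = 0 := by
    rw [hIU₀, real_inner_smul_left]
    field_simp
    linarith
  rw [hcoef, zero_smul]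
  exact 𝔥.zero_mem

lemma IsLieSubalgebra.exists_normalizes (h𝔥 : IsLieSubalgebra 𝔥) :
    ∃ (U₀ : E n) (x₀ : ℝ), Normalizes U₀ x₀ 𝔥 := by
  rcases em (∃ h₀ ∈ 𝔥, h₀.1 ≠ 0) with ⟨h₀, hh₀, hh₀1⟩ | hB
  · exact h𝔥.exists_normalizes_of_fst_ne_zero hh₀ hh₀1
  · push Not at hB
    obtain ⟨U₀, hU₀⟩ := exists_smul_Z_mem 𝔥
    exact ⟨U₀, 0, fun h hh => by simp [hB h hh], hU₀⟩

end NormalForm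

section CR

variable {𝔥 : Submodule ℝ (S n)}

def maxCSSubmodule (𝔥 : Submodule ℝ (S n)) : Submodule ℝ (S n) := 𝔥 ⊓ 𝔥.comap (Js n)

lemma Js_mem_maxCS {x : S n} (hx : x ∈ maxCS n 𝔥) : Js n x ∈ maxCS n 𝔥 :=
  ⟨hx.2, by simpa only [SetLike.mem_coe, Js_Js, neg_mem_iff] using hx.1⟩

lemma IsCRS.sInner_Js_eq_zero (hCR : IsCRS n 𝔥) {r : S n} (hr : r ∈ 𝔥)
    (hro : ∀ w ∈ maxCS n 𝔥, sInner n r w = 0) {q : S n} (hq : q ∈ 𝔥) :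
    sInner n (Js n r) q = 0 := by
  obtain ⟨m, hm, hqm⟩ := exists_sInner_orthogonal (maxCSSubmodule 𝔥) q
  have hJm : sInner n (Js n r) m = 0 := by
    rw [sInner_Js_left, hro _ (Js_mem_maxCS hm), neg_zero]
  have hJr : sInner n (Js n r) (q - m) = 0 :=
    hCR r hr (q - m) (𝔥.sub_mem hq hm.1) hro hqm
  rw [← add_sub_cancel m q, sInner_add_right, hJm, hJr, add_zero]

lemma IsCRS.Js_mem_of_orthogonal (hCR : IsCRS n 𝔥) {u v : S n} (hu : u ∈ 𝔥) (hv : v ∈ 𝔥)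
    (huv : ∀ q ∈ 𝔥, sInner n (Js n u - v) q = 0) : Js n v ∈ 𝔥 := by
  obtain ⟨m, hm, hum⟩ := exists_sInner_orthogonal (maxCSSubmodule 𝔥) u
  have hmv : Js n m = v := by
    have hmem : Js n m - v ∈ 𝔥 := 𝔥.sub_mem hm.2 hv
    have hdecomp : Js n m - v = (Js n u - v) - Js n (u - m) := by
      rw [map_sub]
      abel
    rw [← sub_eq_zero, ← sInner_self_eq_zero]
    nth_rewrite 1 [hdecomp]
    rw [sInner_sub_left, huv _ hmem,
      hCR.sInner_Js_eq_zero (𝔥.sub_mem hu hm.1) hum hmem, sub_zero]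
  rw [← hmv, Js_Js]
  exact 𝔥.neg_mem hm.1

lemma mk_mem_of_Z_mem (hZ : Z n ∈ 𝔥) {v : E n} (hv : v ∈ 𝔥.comap (inE n)) (t : ℝ) :
    ((0 : ℝ), v, t) ∈ 𝔥 := by
  have h : ((0 : ℝ), v, t) = inE n v + t • Z n := by simp [inE, Z]
  rw [h]
  exact 𝔥.add_mem hv (𝔥.smul_mem t hZ)

lemma IsCRS.exists_transversal (hCR : IsCRS n 𝔥) (hZ : Z n ∈ 𝔥) :
    ∃ U₀ : E n, (∀ v ∈ 𝔥.comap (inE n), ⟪U₀, v⟫ = 0) ∧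
      (∀ h ∈ 𝔥, h.2.1 - h.1 • U₀ ∈ 𝔥.comap (inE n)) ∧ Complex.I • U₀ ∈ 𝔥.comap (inE n) := by
  set V := 𝔥.comap (inE n)
  rcases em (∃ h₀ ∈ 𝔥, h₀.1 ≠ 0) with ⟨h₀, hh₀, hh₀1⟩ | hB
  swap
  · push Not at hB
    refine ⟨0, fun v _ => inner_zero_left v, fun h hh => ?_, by simp⟩
    have h' : inE n (h.2.1 - h.1 • 0) = h - h.2.2 • Z n := by
      ext <;> simp [inE, Z, hB h hh]
    show inE n _ ∈ 𝔥
    rw [h']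
    exact 𝔥.sub_mem hh (𝔥.smul_mem _ hZ)
  set U' := h₀.1⁻¹ • h₀.2.1
  set U₀ := U' - V.starProjection U'
  have hU₀ : ∀ v ∈ V, ⟪U₀, v⟫ = 0 :=
    (Submodule.mem_orthogonal' _ _).1 (V.sub_starProjection_mem_orthogonal U')
  have hX₁ : ((1 : ℝ), U₀, (0 : ℝ)) ∈ 𝔥 := by
    have h' : ((1 : ℝ), U₀, (0 : ℝ)) =
        h₀.1⁻¹ • h₀ - ((0 : ℝ), V.starProjection U', h₀.1⁻¹ * h₀.2.2) := by
      ext <;> simp [U₀, U', hh₀1]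
    rw [h']
    exact 𝔥.sub_mem (𝔥.smul_mem _ hh₀) (mk_mem_of_Z_mem hZ (V.starProjection_apply_mem U') _)
  have hsplit : ∀ h ∈ 𝔥, h.2.1 - h.1 • U₀ ∈ V := fun h hh => by
    have h' : inE n (h.2.1 - h.1 • U₀) = h - h.1 • ((1 : ℝ), U₀, (0 : ℝ)) - h.2.2 • Z n := by
      ext <;> simp [inE, Z]
    show inE n _ ∈ 𝔥
    rw [h']
    exact 𝔥.sub_mem (𝔥.sub_mem hh (𝔥.smul_mem _ hX₁)) (𝔥.smul_mem _ hZ)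
  refine ⟨U₀, hU₀, hsplit, ?_⟩
  have hpos : (1 + ‖U₀‖ ^ 2 : ℝ) ≠ 0 := by positivity
  -- the projection of `JZ = -B` to `𝔥` is a multiple of `(1, U₀, 0)`, so `J(1, U₀, 0) ∈ 𝔥`
  have hproj : ∀ q ∈ 𝔥,
      sInner n (Js n (Z n) - (-(1 + ‖U₀‖ ^ 2)⁻¹) • ((1 : ℝ), U₀, (0 : ℝ))) q = 0 := by
    intro q hq
    have hUq : ⟪U₀, q.2.1⟫ = q.1 * ‖U₀‖ ^ 2 := by
      have h := hU₀ _ (hsplit q hq)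
      rw [inner_sub_right, real_inner_smul_right, real_inner_self_eq_norm_sq] at h
      linarith
    simp only [sInner, Js_apply, Z, Prod.fst_sub, Prod.snd_sub, Prod.smul_fst, Prod.smul_snd,
      smul_eq_mul, inner_sub_left, real_inner_smul_left, hUq]
    field_simp
    simp only [smul_zero, inner_zero_left]
    ring
  have hJX₁ := hCR.Js_mem_of_orthogonal hZ (𝔥.smul_mem _ hX₁) hproj
  rw [map_smul] at hJX₁
  simpa [Js_apply] using hsplit _ ((𝔥.smul_mem_iff (neg_ne_zero.2 (inv_ne_zero hpos))).1 hJX₁)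

lemma IsCRS.isCRE_comap_inE (hCR : IsCRS n 𝔥) (hZ : Z n ∈ 𝔥) : IsCRE n (𝔥.comap (inE n)) := by
  set V := 𝔥.comap (inE n)
  obtain ⟨U₀, hU₀, hsplit, hI⟩ := hCR.exists_transversal hZ
  have hpos : (1 + ‖U₀‖ ^ 2 : ℝ) ≠ 0 := by positivity
  -- `tilde x` is the component of `inE x` orthogonal to the complex line through `(1, U₀, 0)`
  let c (x : E n) : ℝ := ⟪x, Complex.I • U₀⟫ / (1 + ‖U₀‖ ^ 2)
  let tilde (x : E n) : S n := ((0 : ℝ), x - c x • Complex.I • U₀, -c x)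
  have htilde_mem : ∀ x ∈ V, tilde x ∈ 𝔥 := fun x hx =>
    mk_mem_of_Z_mem hZ (V.sub_mem hx (V.smul_mem _ hI)) _
  have htilde_orth : ∀ x ∈ V, (∀ w ∈ maxCE n V, ⟪x, w⟫ = 0) →
      ∀ m ∈ maxCS n 𝔥, sInner n (tilde x) m = 0 := by
    intro x hx hxo m hm
    set w := m.2.1 - m.1 • U₀ - m.2.2 • Complex.I • U₀ with hw_def
    have hw : w ∈ maxCE n V := by
      refine ⟨V.sub_mem (hsplit m hm.1) (V.smul_mem _ hI), ?_⟩
      have hJw : Complex.I • w = (Js n m).2.1 - (Js n m).1 • U₀ - m.1 • Complex.I • U₀ := by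
        simp only [w, Js_apply, smul_sub, smul_comm Complex.I (_ : ℝ), I_smul_I_smul]
        module
      rw [hJw]
      exact V.sub_mem (hsplit _ hm.2) (V.smul_mem _ hI)
    have hm2 : m.2.1 = w + m.1 • U₀ + m.2.2 • Complex.I • U₀ := by
      rw [hw_def]
      abel
    have hxU₀ : ⟪x, U₀⟫ = 0 := by rw [real_inner_comm]; exact hU₀ x hx
    have hIU₀w : ⟪Complex.I • U₀, w⟫ = 0 := by
      rw [real_inner_I_smul_left, hU₀ _ hw.2, neg_zero]
    simp only [sInner, c, tilde, hm2, inner_add_right, inner_sub_left, real_inner_smul_left,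
      real_inner_smul_right, hxo w hw, hxU₀, hIU₀w, real_inner_I_smul_self_left_s4,
      real_inner_self_eq_norm_sq, norm_smul, Complex.norm_I, one_mul]
    field_simp
    ring
  have htilde_Js : ∀ x ∈ V, ∀ y ∈ V,
      sInner n (Js n (tilde x)) (tilde y) = ⟪Complex.I • x, y⟫ := by
    intro x hx y hy
    have hxU₀ : ⟪x, U₀⟫ = 0 := by rw [real_inner_comm]; exact hU₀ x hx
    simp only [sInner, Js_apply, tilde, smul_sub, smul_comm Complex.I (_ : ℝ), I_smul_I_smul,
      inner_sub_left, inner_sub_right, inner_neg_left, real_inner_smul_left,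
      real_inner_smul_right, real_inner_I_smul_I_smul, hxU₀, hU₀ y hy,
      real_inner_I_smul_self_right]
    ring
  intro x hx y hy hxo hyo
  rw [← htilde_Js x hx y hy]
  exact hCR _ (htilde_mem x hx) _ (htilde_mem y hy) (htilde_orth x hx hxo) (htilde_orth y hy hyo)

end CR

section ComplexPart

def maxCESubmodule (V : Submodule ℝ (E n)) : Submodule ℝ (E n) where
  carrier := maxCE n V
  add_mem' ha hb := ⟨V.add_mem ha.1 hb.1, by rw [smul_add]; exact V.add_mem ha.2 hb.2⟩
  zero_mem' := ⟨V.zero_mem, by simp⟩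
  smul_mem' c _ hx := ⟨V.smul_mem c hx.1, by rw [smul_comm]; exact V.smul_mem c hx.2⟩

variable {V : Submodule ℝ (E n)}

lemma maxCESubmodule_le : maxCESubmodule V ≤ V := fun _ hx => hx.1

lemma isComplexE_maxCESubmodule (V : Submodule ℝ (E n)) : IsComplexE n (maxCESubmodule V) :=
  fun _ hu => ⟨hu.2, by rw [I_smul_I_smul]; exact V.neg_mem hu.1⟩

lemma TotallyRealE.isCRE (hV : TotallyRealE n V) : IsCRE n V :=
  fun u hu v hv _ _ => hV u hu v hv

lemma IsCRE.totallyRealE (hV : IsCRE n V) : TotallyRealE n ((maxCESubmodule V)ᗮ ⊓ V) :=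
  fun u hu v hv => hV u hu.2 v hv.2 ((Submodule.mem_orthogonal' _ _).1 hu.1)
    ((Submodule.mem_orthogonal' _ _).1 hv.1)

end ComplexPart

theorem statement4_general (n : ℕ) (𝔥 : Submodule ℝ (S n))
    (halg : ∀ X ∈ 𝔥, ∀ Y ∈ 𝔥, bra n X Y ∈ 𝔥)
    (hCR : IsCRS n (𝔥 : Set (S n))) :
    ∃ X : S n, ∃ 𝔟 𝔷 : Submodule ℝ (S n), ∃ 𝔠 𝔯 : Submodule ℝ (E n),
      𝔟 ≤ Submodule.span ℝ {B n} ∧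
      IsComplexE n 𝔠 ∧
      TotallyRealE n 𝔯 ∧
      (∀ u ∈ 𝔯, ∀ v ∈ 𝔠, ⟪u, v⟫ = 0) ∧
      𝔷 ≤ Submodule.span ℝ {Z n} ∧
      (𝔠 ≠ ⊥ → 𝔷 = Submodule.span ℝ {Z n}) ∧
      Submodule.map (expAd n X).toLinearMap 𝔥 =
        𝔟 ⊔ Submodule.map (inE n) 𝔠 ⊔ Submodule.map (inE n) 𝔯 ⊔ 𝔷 := by
  obtain ⟨U₀, x₀, hnorm⟩ := IsLieSubalgebra.exists_normalizes halg
  set X : S n := ((0 : ℝ), (2 : ℝ) • U₀, x₀)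
  have hX : X.1 = 0 := rfl
  set 𝔥' := 𝔥.map (expAd n X).toLinearMap
  set V := 𝔥'.comap (inE n)
  have halg' : IsLieSubalgebra 𝔥' := IsLieSubalgebra.map_expAd halg hX
  have hV : IsCRE n V := by
    by_cases hZ : Z n ∈ 𝔥
    · have hVeq : V = 𝔥.comap (inE n) := comap_inE_map_expAd hX hZ
      rw [hVeq]
      exact hCR.isCRE_comap_inE hZ
    · exact (halg'.totallyRealE_comap_inE (by rwa [Z_mem_map_expAd_iff hX])).isCRE
  refine ⟨X, 𝔥' ⊓ Submodule.span ℝ {B n}, 𝔥' ⊓ Submodule.span ℝ {Z n}, maxCESubmodule V,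
    (maxCESubmodule V)ᗮ ⊓ V, inf_le_right, isComplexE_maxCESubmodule V, hV.totallyRealE,
    fun u hu v hv => (Submodule.mem_orthogonal' _ _).1 hu.1 v hv, inf_le_right, fun h𝔠 => ?_, ?_⟩
  · obtain ⟨c, hc, hc0⟩ := Submodule.exists_mem_ne_zero_of_ne_bot h𝔠
    have hZ := halg'.Z_mem_of_mem_maxCE hc hc0
    exact le_antisymm inf_le_right (le_inf ((Submodule.span_singleton_le_iff_mem _ _).2 hZ) le_rfl)
  · rw [sup_assoc (𝔥' ⊓ _), ← Submodule.map_sup,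
      Submodule.sup_orthogonal_inf_of_hasOrthogonalProjection maxCESubmodule_le]
    exact eq_sup_of_proj_mem (fun y hy => (map_expAd_proj_mem hnorm hy).1)
      (fun y hy => (map_expAd_proj_mem hnorm hy).2)

/-- a Lie subalgebra of `𝔰` which is a CR subspace of `𝔰` is conjugate, via some
`exp(ad(X))`, to an orthogonal direct sum `𝔟 ⊕ 𝔠 ⊕ 𝔯 ⊕ 𝔷` with `𝔟 ⊆ ℝB`, `𝔠` complex in `E`,
`𝔯` totally real in `E` orthogonal to `𝔠`, and `𝔷 ⊆ ℝZ` with `𝔷 = ℝZ` whenever `𝔠 ≠ 0`. -/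
theorem statement4 (n : ℕ) (hn : 2 ≤ n) (𝔥 : Submodule ℝ (S n))
    (halg : ∀ X ∈ 𝔥, ∀ Y ∈ 𝔥, bra n X Y ∈ 𝔥)
    (hCR : IsCRS n (𝔥 : Set (S n))) :
    ∃ X : S n, ∃ 𝔟 𝔷 : Submodule ℝ (S n), ∃ 𝔠 𝔯 : Submodule ℝ (E n),
      𝔟 ≤ Submodule.span ℝ {B n} ∧
      IsComplexE n 𝔠 ∧
      TotallyRealE n 𝔯 ∧
      (∀ u ∈ 𝔯, ∀ v ∈ 𝔠, ⟪u, v⟫ = 0) ∧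
      𝔷 ≤ Submodule.span ℝ {Z n} ∧
      (𝔠 ≠ ⊥ → 𝔷 = Submodule.span ℝ {Z n}) ∧
      Submodule.map (expAd n X).toLinearMap 𝔥 =
        𝔟 ⊔ Submodule.map (inE n) 𝔠 ⊔ Submodule.map (inE n) 𝔯 ⊔ 𝔷 :=
  statement4_general n 𝔥 halg hCR

end CHn
end
end

section
/- Let 𝔟 ∈ {0, ℝB}, let 𝔠 be a complex subspace of E, let 𝔯 be a totally real subspace of E orthogonal to 𝔠, and let 𝔷 ∈ {0, ℝZ} with 𝔷 = ℝZ whenever 𝔠 ≠ 0; set 𝔥 = 𝔟 ⊕ 𝔠 ⊕ 𝔯 ⊕ 𝔷 ⊆ 𝔰. Then for every g ∈ G there exist X ∈ 𝔥 and Y ∈ 𝔰 ⊖ 𝔥 (the orthogonal complement of 𝔥 in 𝔰) such that g = Exp(X)·Exp(Y). -/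
open scoped RealInnerProductSpace

noncomputable section

namespace CHn

variable (n : ℕ)

/-!
Split `U` orthogonally as `U₁ + U₂` with `U₁ ∈ 𝔠 ⊕ 𝔯` and `U₂ ⊥ 𝔠 ⊕ 𝔯`. In
`Exp(cB + W + zZ) · Exp(c'B + W' + z'Z)` the `B`-coordinate is `c + c'`, the `E`-coordinate is
`ρ(c/2)W + e^{c/2}ρ(c'/2)W'`, and the `Z`-coordinate is affine in `z` and `z'` with the nonzero
coefficients `ρ(c)` and `e^c ρ(c')`. So the `B`- and `Z`-coordinates of `g` can each be carried
entirely by `X` (when `B`, resp. `Z`, lies in `𝔥`) or entirely by `Y` (otherwise), while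
`W ∝ U₁` and `W' ∝ U₂`.
-/

variable {n}

lemma rho_pos (t : ℝ) : 0 < rho t := by
  unfold rho
  split_ifs with h
  · exact one_pos
  · rcases lt_or_gt_of_ne h with ht | ht
    · exact div_pos_of_neg_of_neg (by linarith [Real.exp_lt_one_iff.mpr ht]) ht
    · exact div_pos (by linarith [Real.one_lt_exp_iff.mpr ht]) ht

lemma rho_ne_zero (t : ℝ) : rho t ≠ 0 := (rho_pos t).ne'

lemma eq_gmul_Exp_Exp {a x c c' z z' : ℝ} {U U₁ U₂ : E n} (hc : c + c' = a)
    (hU : U₁ + U₂ = U)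
    (hx : rho c * z + Real.exp c * rho c' * z' + 2⁻¹ * ⟪Complex.I • U₁, U₂⟫ = x) :
    ((a, U, x) : G n) = gmul n (Exp n (c, (rho (c / 2))⁻¹ • U₁, z))
      (Exp n (c', (Real.exp (c / 2) * rho (c' / 2))⁻¹ • U₂, z')) := by
  have hρ := rho_ne_zero (c / 2)
  have hρ' := rho_ne_zero (c' / 2)
  have he := Real.exp_ne_zero (c / 2)
  have hE : rho (c' / 2) • (Real.exp (c / 2) * rho (c' / 2))⁻¹ • U₂
      = (Real.exp (c / 2))⁻¹ • U₂ := by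
    rw [smul_smul]; congr 1; field_simp
  simp only [gmul, Exp, hE, smul_smul, mul_inv_cancel₀ hρ, mul_inv_cancel₀ he, one_smul,
    real_inner_smul_right]
  refine Prod.ext hc.symm (Prod.ext hU.symm ?_)
  rw [← hx]
  field_simp

lemma exists_smul_mem_of_eq_bot_or_eq_span {M : Type*} [AddCommGroup M] [Module ℝ M]
    {𝔩 : Submodule ℝ M} {v : M} (h𝔩 : 𝔩 = ⊥ ∨ 𝔩 = Submodule.span ℝ {v}) {p q : ℝ}
    (hp : p ≠ 0) (hq : q ≠ 0) (r : ℝ) :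
    ∃ t t' : ℝ, p * t + q * t' = r ∧ t • v ∈ 𝔩 ∧ (𝔩 = ⊥ ∨ t' = 0) := by
  rcases h𝔩 with rfl | rfl
  · exact ⟨0, r / q, by field_simp; ring, by simp, Or.inl rfl⟩
  · exact ⟨r / p, 0, by field_simp; ring,
      Submodule.smul_mem _ _ (Submodule.mem_span_singleton_self v), Or.inr rfl⟩

def sInnerL (Y : S n) : S n →ₗ[ℝ] ℝ where
  toFun h := sInner n Y h
  map_add' h h' := by
    simp only [sInner, Prod.fst_add, Prod.snd_add, inner_add_right]; ring
  map_smul' c h := by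
    simp only [sInner, Prod.smul_fst, Prod.smul_snd, smul_eq_mul, RingHom.id_apply,
      real_inner_smul_right]
    ring

lemma le_ker_sInnerL_of_eq_bot_or_eq_span {𝔩 : Submodule ℝ (S n)} {v Y : S n}
    (h𝔩 : 𝔩 = ⊥ ∨ 𝔩 = Submodule.span ℝ {v}) (hY : 𝔩 = ⊥ ∨ sInner n Y v = 0) :
    𝔩 ≤ LinearMap.ker (sInnerL Y) := by
  rcases hY with h | h
  · exact h ▸ bot_le
  · rcases h𝔩 with rfl | rfl
    · exact bot_le
    · exact (Submodule.span_singleton_le_iff_mem _ _).2 h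

lemma map_inE_le_ker_sInnerL {K : Submodule ℝ (E n)} {Y : S n} (hY : Y.2.1 ∈ Kᗮ) :
    K.map (inE n) ≤ LinearMap.ker (sInnerL Y) := by
  rintro _ ⟨v, hv, rfl⟩
  have : sInner n Y (inE n v) = ⟪Y.2.1, v⟫ := by simp [sInner, inE]
  simpa [sInnerL, this] using (Submodule.mem_orthogonal' K Y.2.1).1 hY v hv

lemma mk_mem_sup {𝔟 𝔷 : Submodule ℝ (S n)} {K : Submodule ℝ (E n)} {c z : ℝ} {W : E n}
    (hc : c • B n ∈ 𝔟) (hW : W ∈ K) (hz : z • Z n ∈ 𝔷) :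
    ((c, W, z) : S n) ∈ 𝔟 ⊔ K.map (inE n) ⊔ 𝔷 := by
  have : ((c, W, z) : S n) = c • B n + inE n W + z • Z n := by
    refine Prod.ext ?_ (Prod.ext ?_ ?_) <;> simp [B, Z, inE]
  rw [this]
  exact add_mem (add_mem (Submodule.mem_sup_left (Submodule.mem_sup_left hc))
    (Submodule.mem_sup_left (Submodule.mem_sup_right (Submodule.mem_map_of_mem hW))))
    (Submodule.mem_sup_right hz)

lemma sInner_eq_zero_of_mem_sup {𝔟 𝔷 : Submodule ℝ (S n)} {K : Submodule ℝ (E n)} {Y : S n}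
    (h𝔟 : 𝔟 = ⊥ ∨ 𝔟 = Submodule.span ℝ {B n}) (h𝔷 : 𝔷 = ⊥ ∨ 𝔷 = Submodule.span ℝ {Z n})
    (hB : 𝔟 = ⊥ ∨ Y.1 = 0) (hK : Y.2.1 ∈ Kᗮ) (hZ : 𝔷 = ⊥ ∨ Y.2.2 = 0) :
    ∀ h ∈ 𝔟 ⊔ K.map (inE n) ⊔ 𝔷, sInner n Y h = 0 := by
  have hYB : 𝔟 = ⊥ ∨ sInner n Y (B n) = 0 := by simpa [sInner, B] using hB
  have hYZ : 𝔷 = ⊥ ∨ sInner n Y (Z n) = 0 := by simpa [sInner, Z] using hZ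
  have hY : 𝔟 ⊔ K.map (inE n) ⊔ 𝔷 ≤ LinearMap.ker (sInnerL Y) :=
    sup_le (sup_le (le_ker_sInnerL_of_eq_bot_or_eq_span h𝔟 hYB) (map_inE_le_ker_sInnerL hK))
      (le_ker_sInnerL_of_eq_bot_or_eq_span h𝔷 hYZ)
  exact fun h hh => hY hh

theorem statement5_general (n : ℕ)
    (𝔟 𝔷 : Submodule ℝ (S n)) (𝔠 𝔯 : Submodule ℝ (E n))
    (h𝔟 : 𝔟 = ⊥ ∨ 𝔟 = Submodule.span ℝ {B n})
    (h𝔷 : 𝔷 = ⊥ ∨ 𝔷 = Submodule.span ℝ {Z n}) :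
    ∀ g : G n,
      ∃ X ∈ 𝔟 ⊔ Submodule.map (inE n) 𝔠 ⊔ Submodule.map (inE n) 𝔯 ⊔ 𝔷,
      ∃ Y : S n,
        (∀ h ∈ 𝔟 ⊔ Submodule.map (inE n) 𝔠 ⊔ Submodule.map (inE n) 𝔯 ⊔ 𝔷,
          sInner n Y h = 0) ∧
        g = gmul n (Exp n X) (Exp n Y) := by
  rintro ⟨a, U, x⟩
  rw [sup_assoc 𝔟, ← Submodule.map_sup]
  obtain ⟨U₁, hU₁, U₂, hU₂, rfl⟩ := (𝔠 ⊔ 𝔯).exists_add_mem_mem_orthogonal U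
  obtain ⟨c, c', hc, hcB, hc'⟩ :=
    exists_smul_mem_of_eq_bot_or_eq_span h𝔟 one_ne_zero one_ne_zero a
  obtain ⟨z, z', hz, hzZ, hz'⟩ := exists_smul_mem_of_eq_bot_or_eq_span h𝔷 (rho_ne_zero c)
    (mul_ne_zero (Real.exp_ne_zero c) (rho_ne_zero c')) (x - 2⁻¹ * ⟪Complex.I • U₁, U₂⟫)
  refine ⟨(c, (rho (c / 2))⁻¹ • U₁, z), mk_mem_sup hcB (Submodule.smul_mem _ _ hU₁) hzZ,
    (c', (Real.exp (c / 2) * rho (c' / 2))⁻¹ • U₂, z'),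
    sInner_eq_zero_of_mem_sup h𝔟 h𝔷 hc' (Submodule.smul_mem _ _ hU₂) hz',
    eq_gmul_Exp_Exp (by simpa using hc) rfl (by rw [hz]; ring)⟩

/-- for `𝔥 = 𝔟 ⊕ 𝔠 ⊕ 𝔯 ⊕ 𝔷` as indicated, every `g ∈ G` can be written as
`g = Exp(X)·Exp(Y)` with `X ∈ 𝔥` and `Y ∈ 𝔰 ⊖ 𝔥`. -/
theorem statement5 (n : ℕ) (hn : 2 ≤ n)
    (𝔟 𝔷 : Submodule ℝ (S n)) (𝔠 𝔯 : Submodule ℝ (E n))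
    (h𝔟 : 𝔟 = ⊥ ∨ 𝔟 = Submodule.span ℝ {B n})
    (h𝔠 : IsComplexE n 𝔠)
    (h𝔯 : TotallyRealE n 𝔯)
    (h𝔯𝔠 : ∀ u ∈ 𝔯, ∀ v ∈ 𝔠, ⟪u, v⟫ = 0)
    (h𝔷 : 𝔷 = ⊥ ∨ 𝔷 = Submodule.span ℝ {Z n})
    (h𝔠𝔷 : 𝔠 ≠ ⊥ → 𝔷 = Submodule.span ℝ {Z n}) :
    ∀ g : G n,
      ∃ X ∈ 𝔟 ⊔ Submodule.map (inE n) 𝔠 ⊔ Submodule.map (inE n) 𝔯 ⊔ 𝔷,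
      ∃ Y : S n,
        (∀ h ∈ 𝔟 ⊔ Submodule.map (inE n) 𝔠 ⊔ Submodule.map (inE n) 𝔯 ⊔ 𝔷,
          sInner n Y h = 0) ∧
        g = gmul n (Exp n X) (Exp n Y) :=
  statement5_general n 𝔟 𝔷 𝔠 𝔯 h𝔟 h𝔷

end CHn
end
end

section
/- Let 𝔯 be a totally real subspace of E, let T ∈ 𝔯, let W ∈ E be orthogonal to ℂ𝔯 = 𝔯 + J𝔯, and let b, y ∈ ℝ. Then for every S ∈ 𝔯 one has exp(ad(bB+JT+W+yZ))(S) = e^{b/2}S − e^{b/2}ρ(b/2)⟨T,S⟩Z; consequently, exp(ad(bB+JT+W+yZ))(𝔯) = (𝔯 ⊖ ℝT) ⊕ ℝ(T − ρ(b/2)‖T‖²Z). -/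
/-!
On `(0, S, 0)` with `S ∈ 𝔯`, the operator `ad(bB + JT + W + yZ)` acts as `S ↦ (b/2)S - ⟪T, S⟫Z`
(the `W`-term vanishes because `W ⟂ J𝔯`), while `ad(·)Z = bZ`. Exponentiating this triangular
block (diagonalisable when `b ≠ 0`, nilpotent when `b = 0`) gives the formula. Hence `exp ad`
scales `𝔯 ⊖ ℝT` by `e^{b/2}` and sends `T` to `e^{b/2}(T - ρ(b/2)‖T‖²Z)`, and the image follows
from `𝔯 = (𝔯 ⊖ ℝT) ⊕ ℝT`.
-/

open scoped RealInnerProductSpace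

noncomputable section

namespace CHn

variable (n : ℕ)

section ExpApply

variable {M : Type*} [NormedAddCommGroup M] [NormedSpace ℝ M] [CompleteSpace M] (A : M →L[ℝ] M)

theorem exp_apply_eq_tsum (v : M) :
    NormedSpace.exp A v = ∑' k : ℕ, (k.factorial⁻¹ : ℝ) • (A ^ k) v := by
  rw [NormedSpace.exp_eq_tsum ℝ]
  simpa using
    (ContinuousLinearMap.apply ℝ M v).map_tsum (NormedSpace.expSeries_summable' (𝕂 := ℝ) A)

theorem exp_apply_of_apply_eq_smul {v : M} {a : ℝ} (h : A v = a • v) :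
    NormedSpace.exp A v = Real.exp a • v := by
  have hpow (k : ℕ) : (A ^ k) v = a ^ k • v := by
    induction k with
    | zero => simp
    | succ k ih => rw [pow_succ, mul_apply_eq_comp, h, map_smul, ih, smul_smul, pow_succ']
  have hsum := NormedSpace.expSeries_summable' (𝕂 := ℝ) a
  rw [exp_apply_eq_tsum, Real.exp_eq_exp_ℝ, NormedSpace.exp_eq_tsum ℝ]
  simp only [hpow, smul_smul, ← smul_eq_mul]
  exact hsum.tsum_smul_const v

theorem exp_apply_of_apply_apply_eq_zero {v : M} (h : A (A v) = 0) :
    NormedSpace.exp A v = v + A v := by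
  have hpow (k : ℕ) : (A ^ (k + 2)) v = 0 := by
    rw [pow_add, sq, ← mul_assoc, mul_apply_eq_comp, mul_apply_eq_comp, h, map_zero]
  rw [exp_apply_eq_tsum, tsum_eq_sum (s := Finset.range 2)]
  · simp [Finset.sum_range_succ]
  · intro k hk
    obtain ⟨j, rfl⟩ : ∃ j, k = j + 2 := ⟨k - 2, by simp at hk; omega⟩
    rw [hpow, smul_zero]

theorem exp_apply_of_apply_eq_smul_add_smul {u w : M} {a c : ℝ} (hu : A u = a • u + c • w)
    (hw : A w = (2 * a) • w) :
    NormedSpace.exp A u = Real.exp a • u + (c * Real.exp a * rho a) • w := by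
  rcases eq_or_ne a 0 with rfl | ha
  · have hnil : A (A u) = 0 := by simp [hu, hw]
    simp [exp_apply_of_apply_apply_eq_zero A hnil, hu, rho]
  · have heig : A (u - (c / a) • w) = a • (u - (c / a) • w) := by
      rw [map_sub, map_smul, hu, hw]
      match_scalars <;> field_simp
      ring
    calc NormedSpace.exp A u
        = NormedSpace.exp A (u - (c / a) • w) + (c / a) • NormedSpace.exp A w := by
          rw [← map_smul, ← map_add, sub_add_cancel]
      -- `(c/a)(e^{2a} - e^a) = c e^a ρ(a)`
      _ = Real.exp a • u + (c * Real.exp a * rho a) • w := by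
          rw [exp_apply_of_apply_eq_smul A heig, exp_apply_of_apply_eq_smul A hw, rho, if_neg ha,
            two_mul, Real.exp_add]
          match_scalars <;> field_simp
          ring

end ExpApply

theorem map_eq_map_of_eqOn {R M N : Type*} [Semiring R] [AddCommMonoid M]
    [AddCommMonoid N] [Module R M] [Module R N] {f g : M →ₗ[R] N} {p : Submodule R M}
    (h : Set.EqOn f g p) : p.map f = p.map g :=
  SetLike.coe_injective (by simpa only [Submodule.map_coe] using h.image_eq)

theorem map_eq_map_inf_orthogonal_sup_span_singleton {𝕜 F G : Type*} [RCLike 𝕜]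
    [NormedAddCommGroup F] [InnerProductSpace 𝕜 F] [AddCommGroup G] [Module 𝕜 G]
    (f : F →ₗ[𝕜] G) {K : Submodule 𝕜 F} {T : F} (hT : T ∈ K) :
    K.map f = (K ⊓ (𝕜 ∙ T)ᗮ).map f ⊔ 𝕜 ∙ f T := by
  conv_lhs => rw [← Submodule.sup_orthogonal_inf_of_hasOrthogonalProjection
    ((Submodule.span_singleton_le_iff_mem T K).2 hT)]
  rw [Submodule.map_sup, Submodule.map_span, Set.image_singleton, inf_comm, sup_comm]

theorem real_inner_I_smul_left_s6 {ι : Type*} [Fintype ι] (U V : EuclideanSpace ℂ ι) :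
    ⟪Complex.I • U, V⟫ = -⟪U, Complex.I • V⟫ := by
  simp only [PiLp.inner_apply, PiLp.smul_apply, smul_eq_mul, Complex.inner, map_mul,
    Complex.conj_I, ← Finset.sum_neg_distrib]
  refine Finset.sum_congr rfl fun i _ => ?_
  simp only [Complex.mul_re, Complex.mul_im, Complex.neg_re, Complex.neg_im, Complex.I_re,
    Complex.I_im]
  ring

@[simp]
theorem inE_apply (U : E n) : inE n U = (0, U, 0) := rfl

theorem ad_apply_Z (X : S n) : ad n X (Z n) = X.1 • Z n := by
  ext <;> simp [ad, bra, Z]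

theorem ad_apply_inE {b y : ℝ} {T W Sv : E n} (hWS : ⟪W, Complex.I • Sv⟫ = 0) :
    ad n (b, Complex.I • T + W, y) (inE n Sv) = (b / 2) • inE n Sv + (-⟪T, Sv⟫) • Z n := by
  have hJ : Complex.I • (Complex.I • T + W) = -T + Complex.I • W := by
    rw [smul_add, smul_smul, Complex.I_mul_I, neg_one_smul]
  ext
  · simp [ad, bra, Z]
  · simp [ad, bra, Z, smul_smul, div_eq_inv_mul]
  · simp [ad, bra, Z, hJ, inner_add_left, real_inner_I_smul_left_s6, hWS]

theorem expAd_apply_inE {b y : ℝ} {T W Sv : E n} (hWS : ⟪W, Complex.I • Sv⟫ = 0) :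
    expAd n (b, Complex.I • T + W, y) (0, Sv, 0) =
      (0, Real.exp (b / 2) • Sv, -(Real.exp (b / 2) * rho (b / 2) * ⟪T, Sv⟫)) := by
  have hZ : ad n (b, Complex.I • T + W, y) (Z n) = (2 * (b / 2)) • Z n := by
    rw [ad_apply_Z, mul_div_cancel₀ b two_ne_zero]
  rw [expAd, ← inE_apply, exp_apply_of_apply_eq_smul_add_smul _ (ad_apply_inE n hWS) hZ]
  ext <;> simp [Z]
  ring

theorem statement6_general (n : ℕ) (𝔯 : Submodule ℝ (E n))
    (T : E n) (hT : T ∈ 𝔯) (W : E n)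
    (hW : ∀ u ∈ 𝔯, ⟪W, u⟫ = 0 ∧ ⟪W, Complex.I • u⟫ = 0) (b y : ℝ) :
    (∀ Sv ∈ 𝔯,
      expAd n ((b, Complex.I • T + W, y) : S n) ((0, Sv, 0) : S n) =
        ((0, Real.exp (b / 2) • Sv, -(Real.exp (b / 2) * rho (b / 2) * ⟪T, Sv⟫)) : S n)) ∧
    Submodule.map (expAd n ((b, Complex.I • T + W, y) : S n)).toLinearMap
        (Submodule.map (inE n) 𝔯) =
      Submodule.map (inE n) (𝔯 ⊓ (Submodule.span ℝ {T})ᗮ) ⊔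
        Submodule.span ℝ {((0, T, -(rho (b / 2) * ‖T‖ ^ 2)) : S n)} := by
  have hexp : ∀ Sv ∈ 𝔯, expAd n (b, Complex.I • T + W, y) (0, Sv, 0) =
      (0, Real.exp (b / 2) • Sv, -(Real.exp (b / 2) * rho (b / 2) * ⟪T, Sv⟫)) :=
    fun Sv hSv => expAd_apply_inE n (hW Sv hSv).2
  refine ⟨hexp, ?_⟩
  set e := Real.exp (b / 2)
  have he : e ≠ 0 := (Real.exp_pos _).ne'
  set f := (expAd n (b, Complex.I • T + W, y)).toLinearMap ∘ₗ inE n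
  have hf : Set.EqOn f (e • inE n : E n →ₗ[ℝ] S n) ↑(𝔯 ⊓ (ℝ ∙ T)ᗮ) := fun Sv hSv => by
    have hTS : ⟪T, Sv⟫ = 0 := Submodule.mem_orthogonal_singleton_iff_inner_right.1 hSv.2
    simp [f, hexp Sv hSv.1, hTS]
  have hfT : f T = e • ((0, T, -(rho (b / 2) * ‖T‖ ^ 2)) : S n) := by
    simp [f, hexp T hT, mul_assoc]
  rw [← Submodule.map_comp, map_eq_map_inf_orthogonal_sup_span_singleton f hT,
    map_eq_map_of_eqOn hf, Submodule.map_smul _ _ _ he, hfT,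
    Submodule.span_singleton_smul_eq (IsUnit.mk0 _ he)]

/-- for `𝔯` totally real, `T ∈ 𝔯`, `W ⟂ ℂ𝔯`, `b, y ∈ ℝ`:
`exp(ad(bB+JT+W+yZ))(S) = e^{b/2}S − e^{b/2}ρ(b/2)⟨T,S⟩Z` for all `S ∈ 𝔯`, and
`exp(ad(bB+JT+W+yZ))(𝔯) = (𝔯 ⊖ ℝT) ⊕ ℝ(T − ρ(b/2)‖T‖²Z)`. -/
theorem statement6 (n : ℕ) (hn : 2 ≤ n) (𝔯 : Submodule ℝ (E n)) (h𝔯 : TotallyRealE n 𝔯)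
    (T : E n) (hT : T ∈ 𝔯) (W : E n)
    (hW : ∀ u ∈ 𝔯, ⟪W, u⟫ = 0 ∧ ⟪W, Complex.I • u⟫ = 0) (b y : ℝ) :
    (∀ Sv ∈ 𝔯,
      expAd n ((b, Complex.I • T + W, y) : S n) ((0, Sv, 0) : S n) =
        ((0, Real.exp (b / 2) • Sv, -(Real.exp (b / 2) * rho (b / 2) * ⟪T, Sv⟫)) : S n)) ∧
    Submodule.map (expAd n ((b, Complex.I • T + W, y) : S n)).toLinearMap
        (Submodule.map (inE n) 𝔯) =
      Submodule.map (inE n) (𝔯 ⊓ (Submodule.span ℝ {T})ᗮ) ⊔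
        Submodule.span ℝ {((0, T, -(rho (b / 2) * ‖T‖ ^ 2)) : S n)} :=
  statement6_general n 𝔯 T hT W hW b y

end CHn
end
end

section
/- Let 𝔯 be a totally real subspace of E, let T ∈ 𝔯, let W ∈ E be orthogonal to ℂ𝔯 = 𝔯 + J𝔯, and let b, y ∈ ℝ. Then the subspace exp(ad(bB+JT+W+yZ))(𝔯) of 𝔰 is totally real with respect to the ambient complex structure J of 𝔰. -/
/-! Every bracket `[X, ·]` has no `B`-component, and on vectors without `B`-component `ad X`
acts on the `E`-component as multiplication by `b/2`. Hence `exp(ad X)` sends `U ∈ E` to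
`e^{b/2} U + zZ` for some `z`, and since the `Z`-components of two vectors without
`B`-component do not enter `⟪J·, ·⟫`, total reality of `𝔯` is preserved. -/

open scoped RealInnerProductSpace

noncomputable section

namespace CHn

variable (n : ℕ)

theorem _root_.ContinuousLinearMap.apply_exp_of_apply_pow {𝕂 V F : Type*} [RCLike 𝕂]
    [NormedAddCommGroup V] [NormedSpace 𝕂 V] [CompleteSpace V]
    [NormedAddCommGroup F] [NormedSpace 𝕂 F]
    (A : V →L[𝕂] V) (L : V →L[𝕂] F) (c : 𝕂) (v : V)
    (h : ∀ k, L ((A ^ k) v) = c ^ k • L v) :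
    L (NormedSpace.exp A v) = NormedSpace.exp c • L v := by
  have hA := (NormedSpace.exp_series_hasSum_exp' (𝕂 := 𝕂) A).mapL
    (L.comp (ContinuousLinearMap.apply 𝕂 V v))
  have hc := (NormedSpace.exp_series_hasSum_exp' (𝕂 := 𝕂) c).smul_const (L v)
  refine hA.unique (hc.congr_fun fun k => ?_)
  simp only [ContinuousLinearMap.comp_apply, ContinuousLinearMap.apply_apply,
    map_smul, h, smul_smul, smul_eq_mul]

lemma ad_apply_fst (X v : S n) : (ad n X v).1 = 0 := rfl

lemma ad_apply_snd_fst (X v : S n) :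
    (ad n X v).2.1 = (X.1 / 2) • v.2.1 - (v.1 / 2) • X.2.1 := by
  show (2⁻¹ : ℝ) • (X.1 • v.2.1 - v.1 • X.2.1) = _
  rw [smul_sub, smul_smul, smul_smul, div_eq_inv_mul, div_eq_inv_mul]

lemma pow_ad_apply_fst (X v : S n) (k : ℕ) : ((ad n X ^ k) v).1 = 0 ^ k * v.1 := by
  cases k with
  | zero => simp
  | succ k =>
    rw [pow_succ', ContinuousLinearMap.mul_def, ContinuousLinearMap.comp_apply, ad_apply_fst]
    simp

lemma pow_ad_apply_snd_fst (X v : S n) (hv : v.1 = 0) (k : ℕ) :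
    ((ad n X ^ k) v).2.1 = (X.1 / 2) ^ k • v.2.1 := by
  induction k with
  | zero => simp
  | succ k ih =>
    rw [pow_succ', ContinuousLinearMap.mul_def, ContinuousLinearMap.comp_apply, ad_apply_snd_fst,
      ih, pow_ad_apply_fst, hv, mul_zero, zero_div, zero_smul, sub_zero, smul_smul, pow_succ']

lemma expAd_apply_fst (X v : S n) : (expAd n X v).1 = v.1 := by
  simpa [expAd] using
    (ad n X).apply_exp_of_apply_pow (ContinuousLinearMap.fst ℝ ℝ (E n × ℝ)) 0 v
    (by simpa using pow_ad_apply_fst n X v)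

lemma expAd_apply_snd_fst (X v : S n) (hv : v.1 = 0) :
    (expAd n X v).2.1 = Real.exp (X.1 / 2) • v.2.1 := by
  simpa [expAd, Real.exp_eq_exp_ℝ] using (ad n X).apply_exp_of_apply_pow
    ((ContinuousLinearMap.fst ℝ (E n) ℝ).comp (ContinuousLinearMap.snd ℝ ℝ (E n × ℝ)))
    (X.1 / 2) v (by simpa using pow_ad_apply_snd_fst n X v hv)

lemma sInner_Js_of_fst_eq_zero {x v : S n} (hx : x.1 = 0) (hv : v.1 = 0) :
    sInner n (Js n x) v = ⟪Complex.I • x.2.1, v.2.1⟫ := by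
  simp [sInner, Js, hx, hv]

theorem totallyRealS_map_expAd_map_inE (X : S n) {𝔯 : Submodule ℝ (E n)}
    (h𝔯 : TotallyRealE n 𝔯) :
    TotallyRealS n ((𝔯.map (inE n)).map (expAd n X).toLinearMap : Set (S n)) := by
  rintro _ ⟨_, ⟨u, hu, rfl⟩, rfl⟩ _ ⟨_, ⟨w, hw, rfl⟩, rfl⟩
  have hfst (v : E n) : (expAd n X (inE n v)).1 = 0 := expAd_apply_fst n X _
  rw [ContinuousLinearMap.coe_coe, sInner_Js_of_fst_eq_zero n (hfst u) (hfst w),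
    expAd_apply_snd_fst n X _ rfl, expAd_apply_snd_fst n X _ rfl]
  exact h𝔯 _ (𝔯.smul_mem _ hu) _ (𝔯.smul_mem _ hw)

theorem statement7_general (n : ℕ) (𝔯 : Submodule ℝ (E n)) (h𝔯 : TotallyRealE n 𝔯)
    (T : E n) (W : E n) (b y : ℝ) :
    TotallyRealS n
      ((Submodule.map (expAd n ((b, Complex.I • T + W, y) : S n)).toLinearMap
        (Submodule.map (inE n) 𝔯) : Submodule ℝ (S n)) : Set (S n)) :=
  totallyRealS_map_expAd_map_inE n _ h𝔯

/-- for `𝔯` totally real, `T ∈ 𝔯`, `W ⟂ ℂ𝔯`, `b, y ∈ ℝ`, the subspace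
`exp(ad(bB+JT+W+yZ))(𝔯)` of `𝔰` is totally real w.r.t. the ambient complex structure. -/
theorem statement7 (n : ℕ) (hn : 2 ≤ n) (𝔯 : Submodule ℝ (E n)) (h𝔯 : TotallyRealE n 𝔯)
    (T : E n) (hT : T ∈ 𝔯) (W : E n)
    (hW : ∀ u ∈ 𝔯, ⟪W, u⟫ = 0 ∧ ⟪W, Complex.I • u⟫ = 0) (b y : ℝ) :
    TotallyRealS n
      ((Submodule.map (expAd n ((b, Complex.I • T + W, y) : S n)).toLinearMap
        (Submodule.map (inE n) 𝔯) : Submodule ℝ (S n)) : Set (S n)) :=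
  statement7_general n 𝔯 h𝔯 T W b y

end CHn
end
end

section
/- Let 𝔯 be a totally real subspace of E, let T ∈ 𝔯, let W ∈ E be orthogonal to ℂ𝔯 = 𝔯 + J𝔯, and let y ∈ ℝ. Then for all a ∈ ℝ and S ∈ 𝔯 one has exp(ad(2JT+2W+yZ))(aB+S) = aB + S − a(JT+W) − (ay + 2⟨T,S⟩)Z; consequently, exp(ad(2JT+2W+yZ))(ℝB ⊕ 𝔯) = ℝ(B − JT − W − yZ) ⊕ ℝ(T − 2‖T‖²Z) ⊕ (𝔯 ⊖ ℝT). -/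
open scoped RealInnerProductSpace

noncomputable section

/-! For `X = 2JT + 2W + yZ` in the nilradical `E ⊕ ℝZ`, `ad X` maps `𝔰` into the nilradical and
the nilradical into `ℝZ` via `U ↦ ⟪JQ, U⟫Z` (with `Q = 2JT + 2W`), which kills `Q` itself; hence
`(ad X)² = 0` and `exp(ad X) = 1 + ad X`. On `ℝB ⊕ 𝔯` the `Z`-coefficient `⟪JQ, S⟫` equals
`-2⟪T, S⟫` because `W ⟂ J𝔯`, so `exp(ad X)` fixes `𝔯 ⊖ ℝT` pointwise, and the image of
`𝔯 = ℝT ⊕ (𝔯 ⊖ ℝT)` is read off. -/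

theorem NormedSpace.exp_eq_one_add_of_sq_eq_zero {𝔸 : Type*} [Ring 𝔸] [Algebra ℚ 𝔸]
    [TopologicalSpace 𝔸] [IsTopologicalRing 𝔸] {x : 𝔸} (hx : x ^ 2 = 0) :
    NormedSpace.exp x = 1 + x := by
  rw [NormedSpace.exp_eq_tsum_rat]
  dsimp only
  rw [tsum_eq_sum (s := Finset.range 2) fun k hk => by
    rw [pow_eq_zero_of_le (not_lt.1 (Finset.mem_range.not.1 hk)) hx, smul_zero]]
  simp [Finset.sum_range_succ]

theorem EuclideanSpace.real_inner_I_smul_left {ι : Type*} [Fintype ι] (u v : EuclideanSpace ℂ ι) :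
    ⟪Complex.I • u, v⟫ = -⟪u, Complex.I • v⟫ := by
  simp only [PiLp.inner_apply, ← Finset.sum_neg_distrib]
  refine Finset.sum_congr rfl fun i _ => ?_
  simp [Complex.inner]; ring

theorem EuclideanSpace.real_inner_I_smul_self_s10 {ι : Type*} [Fintype ι] (u : EuclideanSpace ℂ ι) :
    ⟪Complex.I • u, u⟫ = 0 := by
  have h := real_inner_I_smul_left u u
  have h' := real_inner_comm u (Complex.I • u)
  linarith

theorem Submodule.map_eq_span_singleton_sup_map_inf_orthogonal {V M : Type*}
    [NormedAddCommGroup V] [InnerProductSpace ℝ V] [AddCommGroup M] [Module ℝ M]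
    {K : Submodule ℝ V} {T : V} (hT : T ∈ K) {φ ψ : V →ₗ[ℝ] M}
    (hφψ : ∀ v ∈ K, ⟪T, v⟫ = 0 → φ v = ψ v) :
    K.map φ = span ℝ {φ T} ⊔ (K ⊓ (span ℝ {T})ᗮ).map ψ := by
  have hK : span ℝ {T} ⊔ (span ℝ {T})ᗮ ⊓ K = K :=
    sup_orthogonal_inf_of_hasOrthogonalProjection ((span_singleton_le_iff_mem _ _).2 hT)
  have hφψ' : (K ⊓ (span ℝ {T})ᗮ).map φ = (K ⊓ (span ℝ {T})ᗮ).map ψ := by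
    refine SetLike.coe_injective ?_
    simp only [map_coe]
    exact Set.image_congr fun v hv =>
      hφψ v hv.1 (mem_orthogonal_singleton_iff_inner_right.1 hv.2)
  conv_lhs => rw [← hK]
  rw [map_sup, map_span, Set.image_singleton, inf_comm, hφψ']

namespace CHn

variable {n}

theorem ad_apply_of_fst_eq_zero (Q : E n) (y : ℝ) (Y : S n) :
    ad n (0, Q, y) Y = (0, -(Y.1 / 2) • Q, ⟪Complex.I • Q, Y.2.1⟫ - Y.1 * y) := by
  refine Prod.ext rfl (Prod.ext ?_ ?_)
  · change (2⁻¹ : ℝ) • ((0 : ℝ) • Y.2.1 - Y.1 • Q) = _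
    module
  · change 0 * Y.2.2 - Y.1 * y + ⟪Complex.I • Q, Y.2.1⟫ = _
    ring

theorem ad_sq_eq_zero_of_fst_eq_zero (Q : E n) (y : ℝ) : ad n (0, Q, y) ^ 2 = 0 := by
  refine ContinuousLinearMap.ext fun Y => ?_
  simp [pow_two, ad_apply_of_fst_eq_zero, real_inner_smul_right,
    EuclideanSpace.real_inner_I_smul_self_s10]

theorem expAd_eq_one_add_ad_of_fst_eq_zero (Q : E n) (y : ℝ) :
    expAd n (0, Q, y) = 1 + ad n (0, Q, y) :=
  NormedSpace.exp_eq_one_add_of_sq_eq_zero (ad_sq_eq_zero_of_fst_eq_zero Q y)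

theorem expAd_apply_of_inner_I_smul_eq_zero (T W : E n) (y a : ℝ) (Sv : E n)
    (hW : ⟪W, Complex.I • Sv⟫ = 0) :
    expAd n (0, (2 : ℝ) • (Complex.I • T) + (2 : ℝ) • W, y) (a, Sv, 0) =
      (a, Sv - a • (Complex.I • T + W), -(a * y + 2 * ⟪T, Sv⟫)) := by
  -- `J(2JT + 2W) = -2T + 2JW` and `⟪JW, S⟫ = -⟪W, JS⟫ = 0`
  have hJ : ⟪Complex.I • ((2 : ℝ) • (Complex.I • T) + (2 : ℝ) • W), Sv⟫ = -(2 * ⟪T, Sv⟫) := by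
    rw [smul_add, smul_comm Complex.I (2 : ℝ), smul_comm Complex.I (2 : ℝ), smul_smul,
      Complex.I_mul_I, neg_one_smul, inner_add_left, real_inner_smul_left, real_inner_smul_left,
      inner_neg_left, EuclideanSpace.real_inner_I_smul_left, hW]
    ring
  rw [expAd_eq_one_add_ad_of_fst_eq_zero, add_apply, one_apply_eq_self,
    ad_apply_of_fst_eq_zero]
  refine Prod.ext (add_zero a) (Prod.ext ?_ ?_)
  · change Sv + -(a / 2) • ((2 : ℝ) • (Complex.I • T) + (2 : ℝ) • W) = _
    module
  · change 0 + (_ - a * y) = _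
    rw [hJ]
    ring

theorem statement10_general (n : ℕ) (𝔯 : Submodule ℝ (E n))
    (T : E n) (hT : T ∈ 𝔯) (W : E n)
    (hW : ∀ u ∈ 𝔯, ⟪W, u⟫ = 0 ∧ ⟪W, Complex.I • u⟫ = 0) (y : ℝ) :
    (∀ a : ℝ, ∀ Sv ∈ 𝔯,
      expAd n ((0, (2 : ℝ) • (Complex.I • T) + (2 : ℝ) • W, y) : S n) ((a, Sv, 0) : S n) =
        ((a, Sv - a • (Complex.I • T + W), -(a * y + 2 * ⟪T, Sv⟫)) : S n)) ∧
    Submodule.map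
        (expAd n ((0, (2 : ℝ) • (Complex.I • T) + (2 : ℝ) • W, y) : S n)).toLinearMap
        (Submodule.span ℝ {B n} ⊔ Submodule.map (inE n) 𝔯) =
      Submodule.span ℝ {((1, -(Complex.I • T) - W, -y) : S n)} ⊔
        Submodule.span ℝ {((0, T, -(2 * ‖T‖ ^ 2)) : S n)} ⊔
        Submodule.map (inE n) (𝔯 ⊓ (Submodule.span ℝ {T})ᗮ) := by
  have hexp : ∀ a : ℝ, ∀ Sv ∈ 𝔯, _ := fun a Sv hSv =>
    expAd_apply_of_inner_I_smul_eq_zero T W y a Sv (hW Sv hSv).2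
  refine ⟨hexp, ?_⟩
  have hB : expAd n (0, (2 : ℝ) • (Complex.I • T) + (2 : ℝ) • W, y) (B n) =
      (1, -(Complex.I • T) - W, -y) := by
    rw [B, hexp 1 0 (zero_mem 𝔯)]
    simp only [one_smul, zero_sub, inner_zero_right, mul_zero, one_mul, add_zero, neg_add']
  have hT' : expAd n (0, (2 : ℝ) • (Complex.I • T) + (2 : ℝ) • W, y) (inE n T) =
      (0, T, -(2 * ‖T‖ ^ 2)) := by
    rw [inE, LinearMap.coe_mk, AddHom.coe_mk, hexp 0 T hT]
    simp
  rw [Submodule.map_sup, Submodule.map_span, Set.image_singleton, ← Submodule.map_comp,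
    Submodule.map_eq_span_singleton_sup_map_inf_orthogonal hT (ψ := inE n), sup_assoc]
  · simp only [ContinuousLinearMap.coe_coe, LinearMap.coe_comp, Function.comp_apply, hB, hT']
  · intro v hv hTv
    simp [inE, hexp 0 v hv, hTv]

/-- for `𝔯` totally real, `T ∈ 𝔯`, `W ⟂ ℂ𝔯`, `y ∈ ℝ`:
`exp(ad(2JT+2W+yZ))(aB+S) = aB + S − a(JT+W) − (ay + 2⟨T,S⟩)Z` for all `a ∈ ℝ`, `S ∈ 𝔯`, and
`exp(ad(2JT+2W+yZ))(ℝB ⊕ 𝔯) = ℝ(B − JT − W − yZ) ⊕ ℝ(T − 2‖T‖²Z) ⊕ (𝔯 ⊖ ℝT)`. -/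
theorem statement10 (n : ℕ) (hn : 2 ≤ n) (𝔯 : Submodule ℝ (E n)) (h𝔯 : TotallyRealE n 𝔯)
    (T : E n) (hT : T ∈ 𝔯) (W : E n)
    (hW : ∀ u ∈ 𝔯, ⟪W, u⟫ = 0 ∧ ⟪W, Complex.I • u⟫ = 0) (y : ℝ) :
    (∀ a : ℝ, ∀ Sv ∈ 𝔯,
      expAd n ((0, (2 : ℝ) • (Complex.I • T) + (2 : ℝ) • W, y) : S n) ((a, Sv, 0) : S n) =
        ((a, Sv - a • (Complex.I • T + W), -(a * y + 2 * ⟪T, Sv⟫)) : S n)) ∧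
    Submodule.map
        (expAd n ((0, (2 : ℝ) • (Complex.I • T) + (2 : ℝ) • W, y) : S n)).toLinearMap
        (Submodule.span ℝ {B n} ⊔ Submodule.map (inE n) 𝔯) =
      Submodule.span ℝ {((1, -(Complex.I • T) - W, -y) : S n)} ⊔
        Submodule.span ℝ {((0, T, -(2 * ‖T‖ ^ 2)) : S n)} ⊔
        Submodule.map (inE n) (𝔯 ⊓ (Submodule.span ℝ {T})ᗮ) :=
  statement10_general n 𝔯 T hT W hW y

end CHn
end
end

section
/- Let 𝔠 be a complex subspace of E, let 𝔯 be a totally real subspace of E orthogonal to 𝔠, let T ∈ 𝔯, and let W ∈ E be orthogonal to 𝔠 ⊕ ℂ𝔯 (where ℂ𝔯 = 𝔯 + J𝔯). Then for all a, x ∈ ℝ, U ∈ 𝔠, S ∈ 𝔯 one has exp(ad(2JT+2W))(aB+U+S+xZ) = aB + U + S − a(JT+W) + (x − 2⟨S,T⟩)Z; consequently, exp(ad(2JT+2W))(ℝB ⊕ 𝔠 ⊕ 𝔯 ⊕ ℝZ) = ℝ(B − JT − W) ⊕ 𝔠 ⊕ 𝔯 ⊕ ℝZ. -/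
/-!
For `P ∈ E`, `ad(P)` sends `aB + V + xZ` to `-(a/2)P + ⟪JP, V⟫Z`; since `⟪JP, P⟫ = 0` this gives
`ad(P)² = 0`, so `exp(ad P) = 1 + ad P`. For `P = 2JT + 2W` the orthogonality hypotheses give
`⟪JP, U + S⟫ = -2⟪S, T⟫`, which is the formula. For the subspaces: `1 + ad P` fixes `Z` and moves
vectors of `E` only along `Z`, so it preserves `𝔳 ⊕ ℝZ` for every `𝔳 ⊆ E`, and it sends `B` to
`B - P/2 = B - JT - W`.
-/

open scoped RealInnerProductSpace

noncomputable section

theorem NormedSpace.exp_eq_sum_of_pow_eq_zero (𝕂 : Type*) {𝔸 : Type*} [Field 𝕂]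
    [CharZero 𝕂] [Ring 𝔸] [Algebra 𝕂 𝔸] [TopologicalSpace 𝔸] [IsTopologicalRing 𝔸]
    {a : 𝔸} {k : ℕ} (h : a ^ k = 0) :
    NormedSpace.exp a = ∑ i ∈ Finset.range k, (i.factorial⁻¹ : 𝕂) • a ^ i := by
  rw [NormedSpace.exp_eq_tsum 𝕂]
  exact tsum_eq_sum fun i hi => by
    rw [pow_eq_zero_of_le (by simpa using hi) h, smul_zero]

theorem Submodule.map_sup_span_singleton_eq_self {R M : Type*} [Ring R] [AddCommGroup M]
    [Module R M] {f : M →ₗ[R] M} {A : Submodule R M} {z : M} (hz : f z = z)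
    (hA : ∀ a ∈ A, ∃ c : R, f a = a + c • z) :
    (A ⊔ R ∙ z).map f = A ⊔ R ∙ z := by
  have hzmem : z ∈ A ⊔ R ∙ z := mem_sup_right (mem_span_singleton_self z)
  refine le_antisymm ?_ (sup_le ?_ ?_)
  · rw [map_le_iff_le_comap]
    refine sup_le (fun a ha => ?_)
      ((span_singleton_le_iff_mem _ _).2 (by simpa [hz] using hzmem))
    obtain ⟨c, hc⟩ := hA a ha
    simpa [hc] using add_mem (mem_sup_left ha) (smul_mem _ c hzmem)
  · intro a ha
    obtain ⟨c, hc⟩ := hA a ha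
    exact ⟨a - c • z, sub_mem (mem_sup_left ha) (smul_mem _ c hzmem), by simp [hc, hz]⟩
  · exact (span_singleton_le_iff_mem _ _).2 ⟨z, hzmem, hz⟩

namespace EuclideanSpace

variable {ι : Type*} [Fintype ι]

theorem real_inner_eq_re_inner (x y : EuclideanSpace ℂ ι) : ⟪x, y⟫ = (inner ℂ x y).re := by
  rw [PiLp.inner_apply, PiLp.inner_apply, Complex.re_sum]
  rfl

theorem real_inner_I_smul_left_s12 (x y : EuclideanSpace ℂ ι) :
    ⟪Complex.I • x, y⟫ = -⟪x, Complex.I • y⟫ := by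
  simp [real_inner_eq_re_inner]

theorem real_inner_I_smul_self_left (x : EuclideanSpace ℂ ι) : ⟪Complex.I • x, x⟫ = 0 := by
  simp [real_inner_eq_re_inner, ← Complex.ofReal_pow]

end EuclideanSpace

namespace CHn

section

variable {n : ℕ}

-- `_E` in the names below: the argument `(0, P, 0)` of `ad` / `expAd` lies in `E ⊆ 𝔰`.

theorem ad_E_apply (P : E n) (Y : S n) :
    ad n (0, P, 0) Y = (0, -(Y.1 / 2) • P, ⟪Complex.I • P, Y.2.1⟫) := by
  simp only [ad, bra, LinearMap.coe_toContinuousLinearMap', LinearMap.coe_mk, AddHom.coe_mk]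
  refine Prod.ext rfl (Prod.ext ?_ ?_)
  · module
  · ring

theorem ad_E_sq (P : E n) : ad n (0, P, 0) ^ 2 = 0 := by
  refine ContinuousLinearMap.ext fun Y => ?_
  simp [sq, ad_E_apply, real_inner_smul_right, EuclideanSpace.real_inner_I_smul_self_left]

theorem expAd_E_apply (P : E n) (Y : S n) :
    expAd n (0, P, 0) Y = (Y.1, Y.2.1 - (Y.1 / 2) • P, Y.2.2 + ⟪Complex.I • P, Y.2.1⟫) := by
  rw [expAd, NormedSpace.exp_eq_sum_of_pow_eq_zero ℝ (ad_E_sq P)]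
  ext <;> simp [Finset.sum_range_succ, ad_E_apply, sub_eq_add_neg]

theorem expAd_E_apply_inE (P u : E n) :
    expAd n (0, P, 0) (inE n u) = inE n u + ⟪Complex.I • P, u⟫ • Z n := by
  rw [expAd_E_apply]
  ext <;> simp [inE, Z]

theorem expAd_E_apply_Z (P : E n) : expAd n (0, P, 0) (Z n) = Z n := by
  rw [expAd_E_apply]
  ext <;> simp [Z]

theorem map_expAd_E_span_B_sup (P : E n) {V : Submodule ℝ (S n)}
    (hV : V ≤ LinearMap.range (inE n)) :
    (Submodule.span ℝ {B n} ⊔ V ⊔ Submodule.span ℝ {Z n}).map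
        (expAd n (0, P, 0)).toLinearMap =
      Submodule.span ℝ {expAd n (0, P, 0) (B n)} ⊔ V ⊔ Submodule.span ℝ {Z n} := by
  rw [sup_assoc, Submodule.map_sup, Submodule.map_span, Set.image_singleton, sup_assoc,
    Submodule.map_sup_span_singleton_eq_self (expAd_E_apply_Z P)]
  · rfl
  · intro a ha
    obtain ⟨u, rfl⟩ := hV ha
    exact ⟨_, expAd_E_apply_inE P u⟩

end

theorem statement12_general (n : ℕ) (𝔠 𝔯 : Submodule ℝ (E n))
    (h𝔠 : IsComplexE n 𝔠)
    (h𝔯𝔠 : ∀ u ∈ 𝔯, ∀ v ∈ 𝔠, ⟪u, v⟫ = 0)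
    (T : E n) (hT : T ∈ 𝔯) (W : E n)
    (hW𝔠 : ∀ u ∈ 𝔠, ⟪W, u⟫ = 0)
    (hW𝔯 : ∀ u ∈ 𝔯, ⟪W, u⟫ = 0 ∧ ⟪W, Complex.I • u⟫ = 0) :
    (∀ a x : ℝ, ∀ U ∈ 𝔠, ∀ Sv ∈ 𝔯,
      expAd n ((0, (2 : ℝ) • (Complex.I • T) + (2 : ℝ) • W, 0) : S n)
          ((a, U + Sv, x) : S n) =
        ((a, U + Sv - a • (Complex.I • T + W), x - 2 * ⟪Sv, T⟫) : S n)) ∧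
    Submodule.map
        (expAd n ((0, (2 : ℝ) • (Complex.I • T) + (2 : ℝ) • W, 0) : S n)).toLinearMap
        (Submodule.span ℝ {B n} ⊔ Submodule.map (inE n) 𝔠 ⊔ Submodule.map (inE n) 𝔯 ⊔
          Submodule.span ℝ {Z n}) =
      Submodule.span ℝ {((1, -(Complex.I • T) - W, 0) : S n)} ⊔ Submodule.map (inE n) 𝔠 ⊔
        Submodule.map (inE n) 𝔯 ⊔ Submodule.span ℝ {Z n} := by
  have hJP (Y : E n) : ⟪Complex.I • ((2 : ℝ) • (Complex.I • T) + (2 : ℝ) • W), Y⟫ =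
      -2 * (⟪T, Y⟫ + ⟪W, Complex.I • Y⟫) := by
    simp only [smul_add, smul_comm Complex.I (2 : ℝ), smul_smul, Complex.I_mul_I, neg_one_smul,
      inner_add_left, real_inner_smul_left, inner_neg_left,
      EuclideanSpace.real_inner_I_smul_left_s12]
    ring
  refine ⟨fun a x U hU Sv hSv => ?_, ?_⟩
  · rw [expAd_E_apply]
    dsimp only
    rw [hJP, inner_add_right, smul_add Complex.I U Sv, inner_add_right, h𝔯𝔠 T hT U hU,
      hW𝔠 _ (h𝔠 U hU), (hW𝔯 Sv hSv).2, real_inner_comm]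
    refine Prod.ext rfl (Prod.ext ?_ ?_) <;> dsimp only
    · module
    · ring
  · have hB : expAd n (0, (2 : ℝ) • (Complex.I • T) + (2 : ℝ) • W, 0) (B n) =
        (1, -(Complex.I • T) - W, 0) := by
      rw [expAd_E_apply]
      refine Prod.ext rfl (Prod.ext ?_ ?_) <;> simp only [B]
      · module
      · simp
    rw [sup_assoc _ (Submodule.map (inE n) 𝔠), sup_assoc _ (Submodule.map (inE n) 𝔠),
      map_expAd_E_span_B_sup _ (sup_le LinearMap.map_le_range LinearMap.map_le_range), hB]

/-- for `𝔠` complex, `𝔯` totally real orthogonal to `𝔠`, `T ∈ 𝔯`, `W ⟂ 𝔠 ⊕ ℂ𝔯`: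
`exp(ad(2JT+2W))(aB+U+S+xZ) = aB + U + S − a(JT+W) + (x − 2⟨S,T⟩)Z` for `U ∈ 𝔠`, `S ∈ 𝔯`, and
`exp(ad(2JT+2W))(ℝB ⊕ 𝔠 ⊕ 𝔯 ⊕ ℝZ) = ℝ(B − JT − W) ⊕ 𝔠 ⊕ 𝔯 ⊕ ℝZ`. -/
theorem statement12 (n : ℕ) (hn : 2 ≤ n) (𝔠 𝔯 : Submodule ℝ (E n))
    (h𝔠 : IsComplexE n 𝔠) (h𝔯 : TotallyRealE n 𝔯)
    (h𝔯𝔠 : ∀ u ∈ 𝔯, ∀ v ∈ 𝔠, ⟪u, v⟫ = 0)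
    (T : E n) (hT : T ∈ 𝔯) (W : E n)
    (hW𝔠 : ∀ u ∈ 𝔠, ⟪W, u⟫ = 0)
    (hW𝔯 : ∀ u ∈ 𝔯, ⟪W, u⟫ = 0 ∧ ⟪W, Complex.I • u⟫ = 0) :
    (∀ a x : ℝ, ∀ U ∈ 𝔠, ∀ Sv ∈ 𝔯,
      expAd n ((0, (2 : ℝ) • (Complex.I • T) + (2 : ℝ) • W, 0) : S n)
          ((a, U + Sv, x) : S n) =
        ((a, U + Sv - a • (Complex.I • T + W), x - 2 * ⟪Sv, T⟫) : S n)) ∧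
    Submodule.map
        (expAd n ((0, (2 : ℝ) • (Complex.I • T) + (2 : ℝ) • W, 0) : S n)).toLinearMap
        (Submodule.span ℝ {B n} ⊔ Submodule.map (inE n) 𝔠 ⊔ Submodule.map (inE n) 𝔯 ⊔
          Submodule.span ℝ {Z n}) =
      Submodule.span ℝ {((1, -(Complex.I • T) - W, 0) : S n)} ⊔ Submodule.map (inE n) 𝔠 ⊔
        Submodule.map (inE n) 𝔯 ⊔ Submodule.span ℝ {Z n} :=
  statement12_general n 𝔠 𝔯 h𝔠 h𝔯𝔠 T hT W hW𝔠 hW𝔯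

end CHn
end
end
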